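/- arXiv:2110.12566 — 9 statements merged into one kernel-verified Lean document; each statement's English description precedes it below -/
import Mathlib

section
/- Let q be a nonnegative continuous function on [0,∞) and let u ∈ C²([0,∞)) satisfy u''(t) = q(t)·u(t) for all t ≥ 0 with u(0) = 0 and u'(0) = 1. Then u(t) > 0 for all t > 0, the derivative u' is monotone non-decreasing on [0,∞), u'(t) ≥ 1 for all t ≥ 0, and u(t) ≥ t for all t ≥ 0. -/
open MeasureTheory Set Filter Topology

/-- Let `q` be a nonnegative continuous function on `[0,∞)` and let
`u ∈ C²([0,∞))` satisfy `u'' = q·u` with `u 0 = 0`, `u' 0 = 1`. Then `u > 0` on `(0,∞)`,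
`u'` is monotone non-decreasing on `[0,∞)`, `u' ≥ 1` and `u t ≥ t` on `[0,∞)`. -/
theorem stmt0 (q u u' u'' : ℝ → ℝ)
    (hq_cont : ContinuousOn q (Set.Ici 0))
    (hq_nonneg : ∀ t ∈ Set.Ici (0:ℝ), 0 ≤ q t)
    (hu' : ∀ t ∈ Set.Ici (0:ℝ), HasDerivWithinAt u (u' t) (Set.Ici 0) t)
    (hu'' : ∀ t ∈ Set.Ici (0:ℝ), HasDerivWithinAt u' (u'' t) (Set.Ici 0) t)
    (hu''_cont : ContinuousOn u'' (Set.Ici 0))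
    (hode : ∀ t ∈ Set.Ici (0:ℝ), u'' t = q t * u t)
    (hu0 : u 0 = 0) (hu'0 : u' 0 = 1) :
    (∀ t > (0:ℝ), 0 < u t) ∧ MonotoneOn u' (Set.Ici 0) ∧
      (∀ t ∈ Set.Ici (0:ℝ), 1 ≤ u' t) ∧ (∀ t ∈ Set.Ici (0:ℝ), t ≤ u t) := by
  have hucont : ContinuousOn u (Set.Ici 0) := fun t ht => (hu' t ht).continuousWithinAt
  have hu'cont : ContinuousOn u' (Set.Ici 0) := fun t ht => (hu'' t ht).continuousWithinAt
  have hderivu : ∀ x : ℝ, 0 < x → HasDerivAt u (u' x) x := fun x hx =>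
    (hu' x hx.le).hasDerivAt (Ici_mem_nhds hx)
  have hderivu' : ∀ x : ℝ, 0 < x → HasDerivAt u' (u'' x) x := fun x hx =>
    (hu'' x hx.le).hasDerivAt (Ici_mem_nhds hx)
  -- key lemma: if u ≥ 0 on [0,c] then u' ≥ 1 and u ≥ id on [0,c]
  have key : ∀ c : ℝ, 0 ≤ c → (∀ s ∈ Icc (0:ℝ) c, 0 ≤ u s) →
      (∀ s ∈ Icc (0:ℝ) c, 1 ≤ u' s) ∧ (∀ s ∈ Icc (0:ℝ) c, s ≤ u s) := by
    intro c hc hnn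
    have hmono : MonotoneOn u' (Icc 0 c) := by
      apply monotoneOn_of_deriv_nonneg (convex_Icc 0 c)
        (hu'cont.mono Icc_subset_Ici_self)
      · intro x hx
        rw [interior_Icc] at hx
        exact (hderivu' x hx.1).differentiableAt.differentiableWithinAt
      · intro x hx
        rw [interior_Icc] at hx
        rw [(hderivu' x hx.1).deriv, hode x hx.1.le]
        exact mul_nonneg (hq_nonneg x hx.1.le) (hnn x ⟨hx.1.le, hx.2.le⟩)
    have h1 : ∀ s ∈ Icc (0:ℝ) c, 1 ≤ u' s := by
      intro s hs
      have := hmono ⟨le_refl 0, hc⟩ hs hs.1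
      rwa [hu'0] at this
    refine ⟨h1, ?_⟩
    have hm2 : MonotoneOn (fun t => u t - t) (Icc 0 c) := by
      apply monotoneOn_of_deriv_nonneg (convex_Icc 0 c)
        ((hucont.mono Icc_subset_Ici_self).sub continuousOn_id)
      · intro x hx
        rw [interior_Icc] at hx
        exact ((hderivu x hx.1).sub (hasDerivAt_id x)).differentiableAt.differentiableWithinAt
      · intro x hx
        rw [interior_Icc] at hx
        rw [((hderivu x hx.1).sub (hasDerivAt_id x)).deriv]
        have := h1 x ⟨hx.1.le, hx.2.le⟩
        linarith
    intro s hs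
    have := hm2 ⟨le_refl 0, hc⟩ hs hs.1
    simp only [hu0] at this
    linarith
  -- u is nonnegative on [0,∞)
  have hnonneg : ∀ t ∈ Set.Ici (0:ℝ), 0 ≤ u t := by
    by_contra h
    push_neg at h
    obtain ⟨t1, ht1, hneg⟩ := h
    -- find δ > 0 with u' > 0 on [0, δ]
    have hpre : u' ⁻¹' Ioi (0:ℝ) ∈ 𝓝[Set.Ici 0] (0:ℝ) := by
      apply hu'cont 0 Set.self_mem_Ici
      apply Ioi_mem_nhds
      rw [hu'0]; norm_num
    rw [mem_nhdsGE_iff_exists_Icc_subset] at hpre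
    obtain ⟨δ, hδpos, hδ⟩ := hpre
    -- u is nonneg on [0, δ]
    have humono : MonotoneOn u (Icc 0 δ) := by
      apply monotoneOn_of_deriv_nonneg (convex_Icc 0 δ)
        (hucont.mono Icc_subset_Ici_self)
      · intro x hx
        rw [interior_Icc] at hx
        exact (hderivu x hx.1).differentiableAt.differentiableWithinAt
      · intro x hx
        rw [interior_Icc] at hx
        rw [(hderivu x hx.1).deriv]
        exact le_of_lt (hδ ⟨hx.1.le, hx.2.le⟩)
    have hnnδ : ∀ s ∈ Icc (0:ℝ) δ, 0 ≤ u s := by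
      intro s hs
      have := humono ⟨le_refl 0, hδpos.le⟩ hs hs.1
      rwa [hu0] at this
    set δ' := min δ t1 with hδ'
    have hδ'pos : 0 < δ' := lt_min hδpos (by
      rcases lt_or_eq_of_le (Set.mem_Ici.mp ht1) with h | h
      · exact h
      · exfalso; rw [← h, hu0] at hneg; exact lt_irrefl 0 hneg)
    have hδ't1 : δ' ≤ t1 := min_le_right _ _
    -- the set of zeros-or-negatives in [δ', t1]
    set B := Icc δ' t1 ∩ u ⁻¹' Iic 0 with hB
    have hBclosed : IsClosed B := by
      apply ContinuousOn.preimage_isClosed_of_isClosed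
        (hucont.mono ?_) isClosed_Icc isClosed_Iic
      intro x hx
      exact le_trans hδ'pos.le hx.1
    have ht1B : t1 ∈ B := ⟨⟨hδ't1, le_refl t1⟩, hneg.le⟩
    have hBne : B.Nonempty := ⟨t1, ht1B⟩
    have hBbdd : BddBelow B := ⟨δ', fun x hx => hx.1.1⟩
    set c := sInf B with hc
    have hcB : c ∈ B := hBclosed.csInf_mem hBne hBbdd
    have hcδ' : δ' ≤ c := hcB.1.1
    have hcpos : 0 < c := lt_of_lt_of_le hδ'pos hcδ'
    -- u ≥ 0 on [0, c)
    have hIco : ∀ s ∈ Ico (0:ℝ) c, 0 ≤ u s := by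
      intro s hs
      by_cases hsδ : s ≤ δ
      · exact hnnδ s ⟨hs.1, hsδ⟩
      · push_neg at hsδ
        by_contra hus
        push_neg at hus
        have hsB : s ∈ B := by
          refine ⟨⟨le_trans (min_le_left _ _) hsδ.le, le_trans hs.2.le hcB.1.2⟩, hus.le⟩
        exact absurd (csInf_le hBbdd hsB) (not_le.mpr hs.2)
    -- u c ≥ 0 by continuity from the left
    have hucge : 0 ≤ u c := by
      have hten : Tendsto u (𝓝[Ico 0 c] c) (𝓝 (u c)) :=
        (hucont c hcpos.le).mono_left
          (nhdsWithin_mono c (fun x hx => hx.1))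
      haveI : (𝓝[Ico (0:ℝ) c] c).NeBot := right_nhdsWithin_Ico_neBot hcpos
      exact ge_of_tendsto hten (eventually_of_mem self_mem_nhdsWithin hIco)
    have hnnc : ∀ s ∈ Icc (0:ℝ) c, 0 ≤ u s := by
      intro s hs
      rcases lt_or_eq_of_le hs.2 with h | h
      · exact hIco s ⟨hs.1, h⟩
      · rw [h]; exact hucge
    obtain ⟨_, hge⟩ := key c hcpos.le hnnc
    have := hge c ⟨hcpos.le, le_refl c⟩
    have huc0 : u c ≤ 0 := hcB.2
    linarith
  -- global monotonicity of u'
  have hmonoglob : MonotoneOn u' (Set.Ici 0) := by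
    apply monotoneOn_of_deriv_nonneg (convex_Ici 0) hu'cont
    · intro x hx
      rw [interior_Ici] at hx
      exact (hderivu' x hx).differentiableAt.differentiableWithinAt
    · intro x hx
      rw [interior_Ici] at hx
      rw [(hderivu' x hx).deriv, hode x (Set.mem_Ici.mpr hx.le)]
      exact mul_nonneg (hq_nonneg x (Set.mem_Ici.mpr hx.le)) (hnonneg x (Set.mem_Ici.mpr hx.le))
  have h1glob : ∀ t ∈ Set.Ici (0:ℝ), 1 ≤ u' t := by
    intro t ht
    exact (key t ht (fun s hs => hnonneg s hs.1)).1 t ⟨ht, le_refl t⟩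
  have hgeglob : ∀ t ∈ Set.Ici (0:ℝ), t ≤ u t := by
    intro t ht
    exact (key t ht (fun s hs => hnonneg s hs.1)).2 t ⟨ht, le_refl t⟩
  exact ⟨fun t ht => lt_of_lt_of_le ht (hgeglob t ht.le), hmonoglob, h1glob, hgeglob⟩
end

section
/- Let q be a nonnegative continuous function on [0,∞) and let u ∈ C²([0,∞)) satisfy u'' = q·u with u(0) = 0 and u'(0) = 1. If u' is bounded on [0,∞) (equivalently, since u' is monotone, the limit L = lim_{t→∞} u'(t) is finite), then ∫₀^∞ t·q(t) dt < ∞; moreover ∫₀^∞ t·q(t) dt ≤ L − 1. -/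
open MeasureTheory Set Filter Topology

/-! `u * u'` has derivative `u' ^ 2 + q * u ^ 2 ≥ 0`, so it stays `≥ u 0 * u' 0 = 0` and `u ^ 2` is
nondecreasing. As `u > 0` just to the right of `0`, `u` can then never come back to `0`
(intermediate value theorem), hence `u > 0` on `(0, ∞)`. Consequently `u'' = q * u ≥ 0`, so
`u' ≥ u' 0 = 1` and `u t ≥ t`, which gives `∫₀ᵇ t * q t ≤ ∫₀ᵇ q * u = u' b - 1 ≤ L - 1` for
every `b`; monotone convergence finishes. -/

lemma monotoneOn_Ici_of_hasDerivWithinAt_nonneg {f f' : ℝ → ℝ} {a : ℝ}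
    (hf : ∀ t ∈ Ici a, HasDerivWithinAt f (f' t) (Ici a) t) (hf' : ∀ t ∈ Ioi a, 0 ≤ f' t) :
    MonotoneOn f (Ici a) := by
  refine monotoneOn_of_hasDerivWithinAt_nonneg (convex_Ici a)
    (fun t ht => (hf t ht).continuousWithinAt) (fun t ht => ?_) (by rwa [interior_Ici])
  rw [interior_Ici] at ht ⊢
  exact (hf t (Ioi_subset_Ici_self ht)).mono Ioi_subset_Ici_self

lemma eventually_pos_of_hasDerivWithinAt_Ici {f : ℝ → ℝ} {f' a : ℝ}
    (hf : HasDerivWithinAt f f' (Ici a) a) (ha : f a = 0) (hf' : 0 < f') :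
    ∀ᶠ t in 𝓝[>] a, 0 < f t := by
  have hslope := (hasDerivWithinAt_iff_tendsto_slope' self_notMem_Ioi).1 hf.Ioi_of_Ici
  filter_upwards [hslope.eventually (lt_mem_nhds hf'), self_mem_nhdsWithin] with t hpos ht
  rw [slope_def_field, ha, sub_zero] at hpos
  exact (div_pos_iff_of_pos_right (sub_pos.2 ht)).1 hpos

lemma integrableOn_Ioi_and_integral_le_of_intervalIntegral_le {f : ℝ → ℝ} {a C : ℝ}
    (hfi : ∀ b, IntegrableOn f (Ioc a b)) (hf : ∀ t ∈ Ioi a, 0 ≤ f t)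
    (hC : ∀ b, a ≤ b → ∫ t in a..b, f t ≤ C) :
    IntegrableOn f (Ioi a) ∧ ∫ t in Ioi a, f t ≤ C := by
  have hint : IntegrableOn f (Ioi a) := by
    refine integrableOn_Ioi_of_intervalIntegral_norm_bounded C a hfi tendsto_id ?_
    filter_upwards [eventually_ge_atTop a] with b hb
    rw [intervalIntegral.integral_of_le hb,
      setIntegral_congr_fun measurableSet_Ioc fun t ht => Real.norm_of_nonneg (hf t ht.1),
      ← intervalIntegral.integral_of_le hb]
    exact hC b hb
  refine ⟨hint, le_of_tendsto (intervalIntegral_tendsto_integral_Ioi a hint tendsto_id) ?_⟩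
  filter_upwards [eventually_ge_atTop a] with b hb
  exact hC b hb

section SecondOrderODE

variable {q u u' : ℝ → ℝ}

lemma monotoneOn_mul_deriv (hq : ∀ t ∈ Ici (0 : ℝ), 0 ≤ q t)
    (hu : ∀ t ∈ Ici (0 : ℝ), HasDerivWithinAt u (u' t) (Ici 0) t)
    (hu' : ∀ t ∈ Ici (0 : ℝ), HasDerivWithinAt u' (q t * u t) (Ici 0) t) :
    MonotoneOn (fun t => u t * u' t) (Ici 0) :=
  monotoneOn_Ici_of_hasDerivWithinAt_nonneg (fun t ht => (hu t ht).mul (hu' t ht))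
    fun t ht => by
      nlinarith [hq t (Ioi_subset_Ici_self ht), mul_self_nonneg (u' t), mul_self_nonneg (u t)]

lemma monotoneOn_sq (hq : ∀ t ∈ Ici (0 : ℝ), 0 ≤ q t)
    (hu : ∀ t ∈ Ici (0 : ℝ), HasDerivWithinAt u (u' t) (Ici 0) t)
    (hu' : ∀ t ∈ Ici (0 : ℝ), HasDerivWithinAt u' (q t * u t) (Ici 0) t) (hu0 : u 0 = 0) :
    MonotoneOn (fun t => u t ^ 2) (Ici 0) := by
  refine monotoneOn_Ici_of_hasDerivWithinAt_nonneg (fun t ht => (hu t ht).pow 2) fun t ht => ?_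
  have h := monotoneOn_mul_deriv hq hu hu' self_mem_Ici (Ioi_subset_Ici_self ht) (le_of_lt ht)
  simp only [hu0, zero_mul] at h
  simpa [mul_assoc] using mul_nonneg zero_le_two h

lemma apply_pos_of_pos (hq : ∀ t ∈ Ici (0 : ℝ), 0 ≤ q t)
    (hu : ∀ t ∈ Ici (0 : ℝ), HasDerivWithinAt u (u' t) (Ici 0) t)
    (hu' : ∀ t ∈ Ici (0 : ℝ), HasDerivWithinAt u' (q t * u t) (Ici 0) t) (hu0 : u 0 = 0)
    (hu'0 : 0 < u' 0) {t : ℝ} (ht : 0 < t) : 0 < u t := by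
  by_contra! hut
  obtain ⟨ε, hεu, hεt⟩ := ((eventually_pos_of_hasDerivWithinAt_Ici (hu 0 self_mem_Ici) hu0
    hu'0).and (Ioo_mem_nhdsGT ht)).exists
  have hcont : ContinuousOn u (Icc ε t) := fun s hs =>
    ((hu s (hεt.1.le.trans hs.1)).continuousWithinAt).mono fun r hr => hεt.1.le.trans hr.1
  obtain ⟨s, hs, hus⟩ := intermediate_value_Icc' hεt.2.le hcont ⟨hut, hεu.le⟩
  have := monotoneOn_sq hq hu hu' hu0 (mem_Ici.2 hεt.1.le) (mem_Ici.2 (hεt.1.le.trans hs.1)) hs.1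
  simp only [hus] at this
  nlinarith

lemma monotoneOn_deriv (hq : ∀ t ∈ Ici (0 : ℝ), 0 ≤ q t)
    (hu : ∀ t ∈ Ici (0 : ℝ), HasDerivWithinAt u (u' t) (Ici 0) t)
    (hu' : ∀ t ∈ Ici (0 : ℝ), HasDerivWithinAt u' (q t * u t) (Ici 0) t) (hu0 : u 0 = 0)
    (hu'0 : 0 < u' 0) : MonotoneOn u' (Ici 0) :=
  monotoneOn_Ici_of_hasDerivWithinAt_nonneg hu' fun t ht =>
    mul_nonneg (hq t (Ioi_subset_Ici_self ht)) (apply_pos_of_pos hq hu hu' hu0 hu'0 ht).le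

lemma deriv_zero_mul_le (hq : ∀ t ∈ Ici (0 : ℝ), 0 ≤ q t)
    (hu : ∀ t ∈ Ici (0 : ℝ), HasDerivWithinAt u (u' t) (Ici 0) t)
    (hu' : ∀ t ∈ Ici (0 : ℝ), HasDerivWithinAt u' (q t * u t) (Ici 0) t) (hu0 : u 0 = 0)
    (hu'0 : 0 < u' 0) {t : ℝ} (ht : 0 ≤ t) : u' 0 * t ≤ u t := by
  have hmono : MonotoneOn (fun s => u s - u' 0 * s) (Ici 0) := by
    refine monotoneOn_Ici_of_hasDerivWithinAt_nonneg (f' := fun s => u' s - u' 0)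
      (fun s hs => by simpa only [mul_one] using
        (hu s hs).fun_sub ((hasDerivAt_id' s).const_mul (u' 0)).hasDerivWithinAt)
      fun s hs => sub_nonneg.2 ?_
    exact monotoneOn_deriv hq hu hu' hu0 hu'0 self_mem_Ici (Ioi_subset_Ici_self hs) (le_of_lt hs)
  have := hmono self_mem_Ici ht ht
  simp only [hu0, mul_zero, sub_zero] at this
  linarith

lemma deriv_zero_mul_intervalIntegral_le (hq_cont : ContinuousOn q (Ici 0))
    (hq : ∀ t ∈ Ici (0 : ℝ), 0 ≤ q t)
    (hu : ∀ t ∈ Ici (0 : ℝ), HasDerivWithinAt u (u' t) (Ici 0) t)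
    (hu' : ∀ t ∈ Ici (0 : ℝ), HasDerivWithinAt u' (q t * u t) (Ici 0) t) (hu0 : u 0 = 0)
    (hu'0 : 0 < u' 0) {b : ℝ} (hb : 0 ≤ b) :
    u' 0 * ∫ t in (0 : ℝ)..b, t * q t ≤ u' b - u' 0 := by
  have hu_cont : ContinuousOn u (Ici 0) := fun t ht => (hu t ht).continuousWithinAt
  have hu'_cont : ContinuousOn u' (Ici 0) := fun t ht => (hu' t ht).continuousWithinAt
  have hqu_int : IntervalIntegrable (fun t => q t * u t) volume 0 b :=
    ((hq_cont.mul hu_cont).mono Icc_subset_Ici_self).intervalIntegrable_of_Icc hb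
  have htq_int : IntervalIntegrable (fun t => u' 0 * t * q t) volume 0 b :=
    (((continuousOn_const.mul continuousOn_id).mul hq_cont).mono
      Icc_subset_Ici_self).intervalIntegrable_of_Icc hb
  calc u' 0 * ∫ t in (0 : ℝ)..b, t * q t = ∫ t in (0 : ℝ)..b, u' 0 * t * q t := by
        simp only [← intervalIntegral.integral_const_mul, mul_assoc]
    _ ≤ ∫ t in (0 : ℝ)..b, q t * u t :=
        intervalIntegral.integral_mono_on hb htq_int hqu_int fun t ht => by
          rw [mul_comm (q t)]
          exact mul_le_mul_of_nonneg_right (deriv_zero_mul_le hq hu hu' hu0 hu'0 ht.1) (hq t ht.1)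
    _ = u' b - u' 0 :=
        intervalIntegral.integral_eq_sub_of_hasDeriv_right_of_le hb
          (hu'_cont.mono Icc_subset_Ici_self)
          (fun t ht => (hu' t ht.1.le).mono fun s hs => ht.1.le.trans (le_of_lt hs)) hqu_int

end SecondOrderODE

theorem stmt2_general (q u u' u'' : ℝ → ℝ) (L : ℝ)
    (hq_cont : ContinuousOn q (Set.Ici 0))
    (hq_nonneg : ∀ t ∈ Set.Ici (0:ℝ), 0 ≤ q t)
    (hu' : ∀ t ∈ Set.Ici (0:ℝ), HasDerivWithinAt u (u' t) (Set.Ici 0) t)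
    (hu'' : ∀ t ∈ Set.Ici (0:ℝ), HasDerivWithinAt u' (u'' t) (Set.Ici 0) t)
    (hode : ∀ t ∈ Set.Ici (0:ℝ), u'' t = q t * u t)
    (hu0 : u 0 = 0) (hu'0 : u' 0 = 1)
    (hL : Filter.Tendsto u' Filter.atTop (nhds L)) :
    MeasureTheory.IntegrableOn (fun t => t * q t) (Set.Ici 0) ∧
      (∫ t in Set.Ici (0:ℝ), t * q t) ≤ L - 1 := by
  have hderiv : ∀ t ∈ Ici (0 : ℝ), HasDerivWithinAt u' (q t * u t) (Ici 0) t :=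
    fun t ht => hode t ht ▸ hu'' t ht
  have hu'0_pos : 0 < u' 0 := hu'0 ▸ one_pos
  have hu'_le : ∀ b, 0 ≤ b → u' b ≤ L := fun b hb =>
    ge_of_tendsto hL <| (eventually_ge_atTop b).mono fun s hs =>
      monotoneOn_deriv hq_nonneg hu' hderiv hu0 hu'0_pos hb (hb.trans hs) hs
  have hbound : ∀ b, 0 ≤ b → ∫ t in (0 : ℝ)..b, t * q t ≤ L - 1 := fun b hb => by
    have := deriv_zero_mul_intervalIntegral_le hq_cont hq_nonneg hu' hderiv hu0 hu'0_pos hb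
    rw [hu'0, one_mul] at this
    linarith [hu'_le b hb]
  have htq_int : ∀ b, IntegrableOn (fun t => t * q t) (Ioc 0 b) := fun b =>
    ((continuousOn_id.mul hq_cont).mono Icc_subset_Ici_self).integrableOn_Icc.mono_set
      Ioc_subset_Icc_self
  obtain ⟨hint, hle⟩ := integrableOn_Ioi_and_integral_le_of_intervalIntegral_le htq_int
    (fun t ht => mul_nonneg (le_of_lt ht) (hq_nonneg t (Ioi_subset_Ici_self ht))) hbound
  rw [integrableOn_Ici_iff_integrableOn_Ioi, integral_Ici_eq_integral_Ioi]
  exact ⟨hint, hle⟩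

/-- Let `q` be a nonnegative continuous function on `[0,∞)` and let
`u ∈ C²([0,∞))` satisfy `u'' = q·u` with `u 0 = 0`, `u' 0 = 1`. If `u'` is bounded on
`[0,∞)`, i.e. (since `u'` is monotone) `u'` tends to a finite limit `L` at `+∞`,
then `∫₀^∞ t·q t dt < ∞` and moreover `∫₀^∞ t·q t dt ≤ L − 1`. -/
theorem stmt2 (q u u' u'' : ℝ → ℝ) (L : ℝ)
    (hq_cont : ContinuousOn q (Set.Ici 0))
    (hq_nonneg : ∀ t ∈ Set.Ici (0:ℝ), 0 ≤ q t)
    (hu' : ∀ t ∈ Set.Ici (0:ℝ), HasDerivWithinAt u (u' t) (Set.Ici 0) t)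
    (hu'' : ∀ t ∈ Set.Ici (0:ℝ), HasDerivWithinAt u' (u'' t) (Set.Ici 0) t)
    (hu''_cont : ContinuousOn u'' (Set.Ici 0))
    (hode : ∀ t ∈ Set.Ici (0:ℝ), u'' t = q t * u t)
    (hu0 : u 0 = 0) (hu'0 : u' 0 = 1)
    (hbdd : ∃ C : ℝ, ∀ t ∈ Set.Ici (0:ℝ), u' t ≤ C)
    (hL : Filter.Tendsto u' Filter.atTop (nhds L)) :
    MeasureTheory.IntegrableOn (fun t => t * q t) (Set.Ici 0) ∧
      (∫ t in Set.Ici (0:ℝ), t * q t) ≤ L - 1 :=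
  stmt2_general q u u' u'' L hq_cont hq_nonneg hu' hu'' hode hu0 hu'0 hL
end

section
/- Let q be a nonnegative continuous function on [0,∞) with ∫₀^∞ t·q(t) dt < ∞, and let u ∈ C²([0,∞)) satisfy u'' = q·u with u(0) = 0 and u'(0) = 1. Then u'(t) ≤ I(q) for every t ≥ 0, where I(q) = exp(∫₀^∞ s·q(s) ds); in particular lim_{t→∞} u'(t) exists, is finite, and is at most I(q). -/
open MeasureTheory Set Filter

/-- Let `q` be a nonnegative continuous function on `[0,∞)` with
`∫₀^∞ t·q t dt < ∞`, and let `u ∈ C²([0,∞))` satisfy `u'' = q·u` with `u 0 = 0`,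
`u' 0 = 1`. Then `u' t ≤ I(q) := exp(∫₀^∞ s·q s ds)` for all `t ≥ 0`; in particular
`u'` has a finite limit at `+∞` which is at most `I(q)`. -/
theorem stmt4 (q u u' u'' : ℝ → ℝ)
    (hq_cont : ContinuousOn q (Set.Ici 0))
    (hq_nonneg : ∀ t ∈ Set.Ici (0:ℝ), 0 ≤ q t)
    (hq_int : MeasureTheory.IntegrableOn (fun t => t * q t) (Set.Ici 0))
    (hu' : ∀ t ∈ Set.Ici (0:ℝ), HasDerivWithinAt u (u' t) (Set.Ici 0) t)
    (hu'' : ∀ t ∈ Set.Ici (0:ℝ), HasDerivWithinAt u' (u'' t) (Set.Ici 0) t)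
    (hu''_cont : ContinuousOn u'' (Set.Ici 0))
    (hode : ∀ t ∈ Set.Ici (0:ℝ), u'' t = q t * u t)
    (hu0 : u 0 = 0) (hu'0 : u' 0 = 1) :
    (∀ t ∈ Set.Ici (0:ℝ), u' t ≤ Real.exp (∫ s in Set.Ici (0:ℝ), s * q s)) ∧
      ∃ L : ℝ, Filter.Tendsto u' Filter.atTop (nhds L) ∧
        L ≤ Real.exp (∫ s in Set.Ici (0:ℝ), s * q s) := by
  have hcu' : ContinuousOn u' (Set.Ici 0) := fun t ht => (hu'' t ht).continuousWithinAt
  have hcu : ContinuousOn u (Set.Ici 0) := fun t ht => (hu' t ht).continuousWithinAt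
  -- Step 1 : u' is positive on [0, ∞)
  have hpos : ∀ t ∈ Set.Ici (0:ℝ), 0 < u' t := by
    by_contra hcon
    push_neg at hcon
    obtain ⟨t₁, ht₁, ht₁'⟩ := hcon
    set S : Set ℝ := Set.Ici 0 ∩ u' ⁻¹' Set.Iic 0 with hS
    have hSne : S.Nonempty := ⟨t₁, ht₁, ht₁'⟩
    have hSclosed : IsClosed S :=
      hcu'.preimage_isClosed_of_isClosed isClosed_Ici isClosed_Iic
    have hSbdd : BddBelow S := ⟨0, fun x hx => hx.1⟩
    set t₀ := sInf S with ht₀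
    have ht₀S : t₀ ∈ S := hSclosed.csInf_mem hSne hSbdd
    have ht₀0 : 0 ≤ t₀ := ht₀S.1
    have ht₀ne : t₀ ≠ 0 := by
      intro h
      have : u' t₀ ≤ 0 := ht₀S.2
      rw [h, hu'0] at this; linarith
    have ht₀pos : 0 < t₀ := lt_of_le_of_ne ht₀0 (Ne.symm ht₀ne)
    -- on [0, t₀), u' > 0
    have hlt : ∀ s ∈ Set.Ico (0:ℝ) t₀, 0 < u' s := by
      intro s hs
      by_contra h
      push_neg at h
      have : s ∈ S := ⟨hs.1, h⟩
      exact absurd (csInf_le hSbdd this) (not_le.2 hs.2)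
    -- u is monotone on [0, t₀]
    have hIcc : Set.Icc (0:ℝ) t₀ ⊆ Set.Ici 0 := fun x hx => hx.1
    have hintIcc : interior (Set.Icc (0:ℝ) t₀) = Set.Ioo 0 t₀ := interior_Icc
    have humono : MonotoneOn u (Set.Icc 0 t₀) := by
      apply monotoneOn_of_hasDerivWithinAt_nonneg (convex_Icc 0 t₀) (hcu.mono hIcc)
        (f' := u')
      · intro x hx
        rw [hintIcc] at hx
        exact (hu' x (le_of_lt hx.1)).mono (fun y hy => (interior_subset hy).1)
      · intro x hx
        rw [hintIcc] at hx
        exact le_of_lt (hlt x ⟨le_of_lt hx.1, hx.2⟩)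
    have hu_nonneg : ∀ x ∈ Set.Icc (0:ℝ) t₀, 0 ≤ u x := by
      intro x hx
      have := humono (Set.left_mem_Icc.2 (le_of_lt ht₀pos)) hx hx.1
      rwa [hu0] at this
    have hu'mono : MonotoneOn u' (Set.Icc 0 t₀) := by
      apply monotoneOn_of_hasDerivWithinAt_nonneg (convex_Icc 0 t₀) (hcu'.mono hIcc)
        (f' := u'')
      · intro x hx
        rw [hintIcc] at hx
        exact (hu'' x (le_of_lt hx.1)).mono (fun y hy => (interior_subset hy).1)
      · intro x hx
        rw [hintIcc] at hx
        have hx0 : (0:ℝ) ≤ x := le_of_lt hx.1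
        rw [hode x hx0]
        exact mul_nonneg (hq_nonneg x hx0) (hu_nonneg x ⟨hx0, le_of_lt hx.2⟩)
    have h1 : u' 0 ≤ u' t₀ :=
      hu'mono (Set.left_mem_Icc.2 (le_of_lt ht₀pos))
        (Set.right_mem_Icc.2 (le_of_lt ht₀pos)) (le_of_lt ht₀pos)
    rw [hu'0] at h1
    have h2 : u' t₀ ≤ 0 := ht₀S.2
    linarith
  -- u is monotone on [0,∞), hence nonnegative
  have humono : MonotoneOn u (Set.Ici 0) := by
    apply monotoneOn_of_hasDerivWithinAt_nonneg (convex_Ici 0) hcu (f' := u')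
    · intro x hx
      rw [interior_Ici] at hx
      exact (hu' x (Set.mem_Ici.2 (le_of_lt (Set.mem_Ioi.1 hx)))).mono (fun y hy => interior_subset hy)
    · intro x hx
      rw [interior_Ici] at hx
      exact le_of_lt (hpos x (Set.mem_Ici.2 (le_of_lt (Set.mem_Ioi.1 hx))))
  have hu_nonneg : ∀ x ∈ Set.Ici (0:ℝ), 0 ≤ u x := by
    intro x hx
    have := humono (Set.self_mem_Ici) hx hx
    rwa [hu0] at this
  -- u' is monotone on [0,∞)
  have hu'mono : MonotoneOn u' (Set.Ici 0) := by
    apply monotoneOn_of_hasDerivWithinAt_nonneg (convex_Ici 0) hcu' (f' := u'')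
    · intro x hx
      rw [interior_Ici] at hx
      exact (hu'' x (Set.mem_Ici.2 (le_of_lt (Set.mem_Ioi.1 hx)))).mono (fun y hy => interior_subset hy)
    · intro x hx
      rw [interior_Ici] at hx
      have hx0 : (0:ℝ) ≤ x := le_of_lt hx
      rw [hode x hx0]
      exact mul_nonneg (hq_nonneg x hx0) (hu_nonneg x hx0)
  -- Step 3 : u t ≤ t * u' t
  have hkey : ∀ t ∈ Set.Ici (0:ℝ), u t ≤ t * u' t := by
    intro t ht
    have hg : MonotoneOn (fun s => u' t * s - u s) (Set.Icc 0 t) := by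
      apply monotoneOn_of_hasDerivWithinAt_nonneg (convex_Icc 0 t)
        (Continuous.continuousOn (by continuity) |>.sub (hcu.mono (fun x hx => hx.1)))
        (f' := fun s => u' t - u' s)
      · intro x hx
        rw [interior_Icc] at hx
        exact (mul_one (u' t) ▸ ((hasDerivWithinAt_id x _).const_mul (u' t)).sub
          ((hu' x (le_of_lt hx.1)).mono
            (fun y (hy : y ∈ interior (Set.Icc (0:ℝ) t)) => (interior_subset hy).1)) : _)
      · intro x hx
        rw [interior_Icc] at hx
        have := hu'mono (le_of_lt hx.1 : x ∈ Set.Ici (0:ℝ)) ht (le_of_lt hx.2)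
        linarith
    have h0t : (0:ℝ) ≤ t := ht
    have := hg (Set.left_mem_Icc.2 h0t) (Set.right_mem_Icc.2 h0t) h0t
    simp only [mul_zero, hu0, sub_zero] at this
    linarith
  -- The primitive F
  set f : ℝ → ℝ := fun s => s * q s with hf
  set F : ℝ → ℝ := fun x => ∫ s in (0:ℝ)..x, f s with hFdef
  have hf_cont : ContinuousOn f (Set.Ici 0) := (continuous_id.continuousOn).mul hq_cont
  have hint : ∀ t : ℝ, 0 ≤ t → IntervalIntegrable f volume 0 t := by
    intro t ht
    rw [intervalIntegrable_iff, Set.uIoc_of_le ht]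
    exact hq_int.mono_set (fun y hy => le_of_lt hy.1)
  -- derivative of F at interior points
  have hFderiv : ∀ x : ℝ, 0 < x → HasDerivAt F (f x) x := by
    intro x hx
    apply intervalIntegral.integral_hasDerivAt_right (hint x (le_of_lt hx))
    · exact (hf_cont.mono (fun y (hy : y ∈ Set.Ioi (0:ℝ)) =>
        Set.mem_Ici.2 (le_of_lt (Set.mem_Ioi.1 hy)))).stronglyMeasurableAtFilter isOpen_Ioi x hx
    · exact (hf_cont x (le_of_lt hx)).continuousAt (Ici_mem_nhds hx)
  have hF0 : F 0 = 0 := intervalIntegral.integral_same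
  -- Step 5 : u' t ≤ exp (F t)
  have hbound : ∀ t ∈ Set.Ici (0:ℝ), u' t ≤ Real.exp (F t) := by
    intro t ht
    have hFcont : ContinuousOn F (Set.Icc 0 t) := by
      have := intervalIntegral.continuousOn_primitive_interval
        (a := 0) (b := t) (μ := volume) (f := f) ?_
      · rwa [Set.uIcc_of_le ht] at this
      · rw [Set.uIcc_of_le ht]
        exact hq_int.mono_set (fun y hy => hy.1)
    have hh : AntitoneOn (fun s => u' s * Real.exp (-F s)) (Set.Icc 0 t) := by
      apply antitoneOn_of_hasDerivWithinAt_nonpos (convex_Icc 0 t)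
        ((hcu'.mono (fun x hx => hx.1)).mul ((hFcont.neg).rexp))
        (f' := fun x => u'' x * Real.exp (-F x) + u' x * (Real.exp (-F x) * -(f x)))
      · intro x hx
        rw [interior_Icc] at hx
        have h1 : HasDerivAt (fun s => Real.exp (-F s)) (Real.exp (-F x) * -(f x)) x :=
          ((hFderiv x hx.1).neg).exp
        have h2 : HasDerivWithinAt u' (u'' x) (interior (Set.Icc 0 t)) x :=
          (hu'' x (le_of_lt hx.1)).mono
            (fun y hy => (interior_subset hy).1)
        exact h2.mul h1.hasDerivWithinAt
      · intro x hx
        rw [interior_Icc] at hx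
        have hx0 : (0:ℝ) ≤ x := le_of_lt hx.1
        have hq0 : 0 ≤ q x := hq_nonneg x hx0
        have hux : u x ≤ x * u' x := hkey x hx0
        have hexp : 0 < Real.exp (-F x) := Real.exp_pos _
        rw [hode x hx0, hf]
        have : q x * u x * Real.exp (-F x) + u' x * (Real.exp (-F x) * -(x * q x))
            = Real.exp (-F x) * (q x * (u x - x * u' x)) := by ring
        rw [this]
        apply mul_nonpos_of_nonneg_of_nonpos (le_of_lt hexp)
        exact mul_nonpos_of_nonneg_of_nonpos hq0 (by linarith)
    have h0t : (0:ℝ) ≤ t := ht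
    have this2 : u' t * Real.exp (-F t) ≤ u' 0 * Real.exp (-F 0) :=
      hh (Set.left_mem_Icc.2 h0t) (Set.right_mem_Icc.2 h0t) h0t
    rw [hu'0, hF0, neg_zero, Real.exp_zero, one_mul] at this2
    have this := this2
    have hexp : 0 < Real.exp (-F t) := Real.exp_pos _
    have h2 : u' t * Real.exp (-F t) ≤ 1 := this
    rw [Real.exp_neg] at h2
    calc u' t = u' t * (Real.exp (F t))⁻¹ * Real.exp (F t) := by
            field_simp
      _ ≤ 1 * Real.exp (F t) := by
            apply mul_le_mul_of_nonneg_right h2 (le_of_lt (Real.exp_pos _))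
      _ = Real.exp (F t) := one_mul _
  -- Step 6 : F t ≤ ∫_{[0,∞)} f
  have hFle : ∀ t ∈ Set.Ici (0:ℝ), F t ≤ ∫ s in Set.Ici (0:ℝ), s * q s := by
    intro t ht
    have hFt : F t = ∫ s in Set.Ioc (0:ℝ) t, f s := intervalIntegral.integral_of_le ht
    rw [hFt]
    apply setIntegral_mono_set hq_int
    · filter_upwards [ae_restrict_mem measurableSet_Ici] with x hx
      exact mul_nonneg hx (hq_nonneg x hx)
    · exact HasSubset.Subset.eventuallyLE (fun y hy => le_of_lt hy.1)
  set Iq := Real.exp (∫ s in Set.Ici (0:ℝ), s * q s) with hIq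
  have hmain : ∀ t ∈ Set.Ici (0:ℝ), u' t ≤ Iq := by
    intro t ht
    exact le_trans (hbound t ht) (Real.exp_le_exp.2 (hFle t ht))
  refine ⟨hmain, ?_⟩
  -- Step 7 : the limit
  set v : ℝ → ℝ := fun t => u' (max t 0) with hv
  have hvmono : Monotone v := fun a b hab =>
    hu'mono (le_max_right a 0) (le_max_right b 0) (max_le_max hab le_rfl)
  have hvbdd : BddAbove (Set.range v) := by
    refine ⟨Iq, ?_⟩
    rintro _ ⟨t, rfl⟩
    exact hmain _ (le_max_right t 0)
  have hlim : Filter.Tendsto v Filter.atTop (nhds (⨆ t, v t)) :=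
    tendsto_atTop_ciSup hvmono hvbdd
  refine ⟨⨆ t, v t, ?_, ?_⟩
  · apply hlim.congr'
    filter_upwards [Filter.eventually_ge_atTop (0:ℝ)] with t ht
    simp [hv, max_eq_left ht]
  · exact ciSup_le fun t => hmain _ (le_max_right t 0)
end

section
/- Let q be a nonnegative continuous function on [0,∞), let u ∈ C²([0,∞)) satisfy u'' = q·u with u(0) = 0 and u'(0) = 1, and let h ∈ C¹((0,∞)) satisfy the Riccati equation h'(t) + h(t)² − q(t) = 0 for all t > 0 together with lim_{t→0⁺} t·h(t) = 1. Then h(t) = u'(t)/u(t) for all t > 0. -/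
open MeasureTheory Set Filter

/-- Let `q` be a nonnegative continuous function on `[0,∞)`, let
`u ∈ C²([0,∞))` satisfy `u'' = q·u` with `u 0 = 0`, `u' 0 = 1`, and let
`h ∈ C¹((0,∞))` solve the Riccati equation `h' + h² − q = 0` on `(0,∞)` with
`lim_{t→0⁺} t·h t = 1`. Then `h t = u' t / u t` for all `t > 0`. -/
theorem stmt5 (q u u' u'' h h' : ℝ → ℝ)
    (hq_cont : ContinuousOn q (Set.Ici 0))
    (hq_nonneg : ∀ t ∈ Set.Ici (0:ℝ), 0 ≤ q t)
    (hu' : ∀ t ∈ Set.Ici (0:ℝ), HasDerivWithinAt u (u' t) (Set.Ici 0) t)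
    (hu'' : ∀ t ∈ Set.Ici (0:ℝ), HasDerivWithinAt u' (u'' t) (Set.Ici 0) t)
    (hu''_cont : ContinuousOn u'' (Set.Ici 0))
    (hode : ∀ t ∈ Set.Ici (0:ℝ), u'' t = q t * u t)
    (hu0 : u 0 = 0) (hu'0 : u' 0 = 1)
    (hh' : ∀ t ∈ Set.Ioi (0:ℝ), HasDerivAt h (h' t) t)
    (hh'_cont : ContinuousOn h' (Set.Ioi 0))
    (hric : ∀ t ∈ Set.Ioi (0:ℝ), h' t + (h t)^2 - q t = 0)
    (hlim : Filter.Tendsto (fun t => t * h t) (nhdsWithin 0 (Set.Ioi 0)) (nhds 1)) :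
    ∀ t ∈ Set.Ioi (0:ℝ), h t = u' t / u t := by
  -- basic continuity
  have hu_cont : ContinuousOn u (Set.Ici 0) := fun t ht => (hu' t ht).continuousWithinAt
  have hu'_cont : ContinuousOn u' (Set.Ici 0) := fun t ht => (hu'' t ht).continuousWithinAt
  -- derivatives as `HasDerivAt` for positive times
  have huAt : ∀ t ∈ Set.Ioi (0:ℝ), HasDerivAt u (u' t) t := fun t ht =>
    (hu' t (Set.mem_Ici.2 (le_of_lt ht))).hasDerivAt (Ici_mem_nhds ht)
  have hu'At : ∀ t ∈ Set.Ioi (0:ℝ), HasDerivAt u' (u'' t) t := fun t ht =>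
    (hu'' t (Set.mem_Ici.2 (le_of_lt ht))).hasDerivAt (Ici_mem_nhds ht)
  -- slope limit : u t / t → 1 as t → 0⁺
  have hslope : Tendsto (fun t => u t / t) (nhdsWithin 0 (Set.Ioi 0)) (nhds 1) := by
    have h1 : HasDerivWithinAt u 1 (Set.Ici 0) 0 := hu'0 ▸ hu' 0 self_mem_Ici
    rw [hasDerivWithinAt_iff_tendsto_slope] at h1
    have hset : (Set.Ici (0:ℝ)) \ {0} = Set.Ioi 0 := by
      ext x; simp [Set.mem_Ici, Set.mem_Ioi, lt_iff_le_and_ne, eq_comm]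
    rw [hset] at h1
    refine h1.congr fun t => ?_
    simp [slope_def_field, hu0]
  -- u is positive near 0
  obtain ⟨δ, hδ0, hδ⟩ : ∃ δ > (0:ℝ), ∀ t ∈ Set.Ioo 0 δ, 0 < u t := by
    have hupos_ev : ∀ᶠ t in nhdsWithin 0 (Set.Ioi 0), 0 < u t := by
      filter_upwards [hslope.eventually (lt_mem_nhds (by norm_num : (0:ℝ) < 1)),
        self_mem_nhdsWithin] with t h1 h2
      have ht : (0:ℝ) < t := h2
      have := mul_pos h1 ht
      rwa [div_mul_cancel₀ _ ht.ne'] at this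
    rcases mem_nhdsGT_iff_exists_Ioo_subset.1 hupos_ev with ⟨δ, hδ, hsub⟩
    exact ⟨δ, hδ, fun t ht => hsub ht⟩
  -- u is positive on all of (0,∞)
  have hupos : ∀ t ∈ Set.Ioi (0:ℝ), 0 < u t := by
    by_contra hcon
    push_neg at hcon
    obtain ⟨t₀, ht₀, ht₀u⟩ := hcon
    have ht₀pos : (0:ℝ) < t₀ := ht₀
    set Z : Set ℝ := Set.Ici δ ∩ u ⁻¹' Set.Iic 0 with hZdef
    have ht₀δ : δ ≤ t₀ := by
      by_contra hlt
      exact absurd ht₀u (not_le.2 (hδ t₀ ⟨ht₀pos, not_le.1 hlt⟩))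
    have hZne : Z.Nonempty := ⟨t₀, ht₀δ, ht₀u⟩
    have hZclosed : IsClosed Z := by
      have : ContinuousOn u (Set.Ici δ) := hu_cont.mono (Set.Ici_subset_Ici.2 (le_of_lt hδ0))
      exact this.preimage_isClosed_of_isClosed isClosed_Ici isClosed_Iic
    have hZbdd : BddBelow Z := ⟨δ, fun z hz => hz.1⟩
    set T := sInf Z with hTdef
    have hTZ : T ∈ Z := hZclosed.csInf_mem hZne hZbdd
    have hTδ : δ ≤ T := hTZ.1
    have hTpos : (0:ℝ) < T := lt_of_lt_of_le hδ0 hTδ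
    have hTu : u T ≤ 0 := hTZ.2
    -- u is positive strictly before T
    have hmid : ∀ s ∈ Set.Ioo (0:ℝ) T, 0 < u s := by
      intro s hs
      by_cases hsδ : s < δ
      · exact hδ s ⟨hs.1, hsδ⟩
      · by_contra hneg
        have : s ∈ Z := ⟨not_lt.1 hsδ, not_lt.1 hneg⟩
        exact absurd (csInf_le hZbdd this) (not_le.2 hs.2)
    -- u ≥ 0 on the closed interval is only needed in the interior for monotonicity
    have hint : interior (Set.Icc (0:ℝ) T) = Set.Ioo 0 T := interior_Icc
    have hmono : MonotoneOn u' (Set.Icc 0 T) := by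
      apply monotoneOn_of_hasDerivWithinAt_nonneg (f' := u'') (convex_Icc 0 T)
        (hu'_cont.mono (by intro x hx; exact hx.1))
      · intro x hx
        rw [hint] at hx
        exact ((hu'At x hx.1).hasDerivWithinAt)
      · intro x hx
        rw [hint] at hx
        rw [hode x (Set.mem_Ici.2 (le_of_lt hx.1))]
        exact mul_nonneg (hq_nonneg x (Set.mem_Ici.2 (le_of_lt hx.1))) (le_of_lt (hmid x hx))
    have hu'ge : ∀ s ∈ Set.Icc (0:ℝ) T, 1 ≤ u' s := by
      intro s hs
      have := hmono (Set.left_mem_Icc.2 (le_of_lt hTpos)) hs hs.1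
      rwa [hu'0] at this
    -- then u T ≥ T > 0, contradiction
    have hmono2 : MonotoneOn (fun t => u t - t) (Set.Icc 0 T) := by
      apply monotoneOn_of_hasDerivWithinAt_nonneg (f' := fun t => u' t - 1) (convex_Icc 0 T)
        (ContinuousOn.sub (hu_cont.mono (by intro x hx; exact hx.1)) continuousOn_id)
      · intro x hx
        rw [hint] at hx
        exact ((huAt x hx.1).sub (hasDerivAt_id x)).hasDerivWithinAt
      · intro x hx
        rw [hint] at hx
        have := hu'ge x ⟨le_of_lt hx.1, le_of_lt hx.2⟩
        linarith
    have := hmono2 (Set.left_mem_Icc.2 (le_of_lt hTpos))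
      (Set.right_mem_Icc.2 (le_of_lt hTpos)) (le_of_lt hTpos)
    simp only [hu0] at this
    linarith
  -- the Wronskian-like quantity
  set w : ℝ → ℝ := fun t => h t * u t - u' t with hwdef
  have hw' : ∀ t ∈ Set.Ioi (0:ℝ), HasDerivAt w (-(h t) * w t) t := by
    intro t ht
    have hd : HasDerivAt w (h' t * u t + h t * u' t - u'' t) t :=
      ((hh' t ht).mul (huAt t ht)).sub (hu'At t ht)
    have e1 : h' t = q t - (h t)^2 := by have := hric t ht; linarith
    have e2 : u'' t = q t * u t := hode t (Set.mem_Ici.2 (le_of_lt ht))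
    convert hd using 1
    rw [e1, e2, hwdef]; ring
  -- w tends to 0 at 0⁺
  have hu'lim : Tendsto u' (nhdsWithin 0 (Set.Ioi 0)) (nhds 1) := by
    have := (hu'_cont 0 self_mem_Ici).tendsto
    rw [hu'0] at this
    exact this.mono_left (nhdsWithin_mono 0 Set.Ioi_subset_Ici_self)
  have hwlim : Tendsto w (nhdsWithin 0 (Set.Ioi 0)) (nhds 0) := by
    have key : Tendsto (fun t => (t * h t) * (u t / t) - u' t)
        (nhdsWithin 0 (Set.Ioi 0)) (nhds (1 * 1 - 1)) := (hlim.mul hslope).sub hu'lim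
    rw [show (1:ℝ) * 1 - 1 = 0 by norm_num] at key
    refine key.congr' ?_
    filter_upwards [self_mem_nhdsWithin] with t ht
    have ht0 : (0:ℝ) < t := ht
    rw [hwdef]
    field_simp
  -- h is positive near 0
  obtain ⟨δ₂, hδ₂0, hδ₂⟩ : ∃ δ₂ > (0:ℝ), ∀ t ∈ Set.Ioo 0 δ₂, 0 < h t := by
    have hev : ∀ᶠ t in nhdsWithin 0 (Set.Ioi 0), 0 < h t := by
      filter_upwards [hlim.eventually (lt_mem_nhds (by norm_num : (0:ℝ) < 1)),
        self_mem_nhdsWithin] with t h1 h2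
      have ht : (0:ℝ) < t := h2
      have := div_pos h1 ht
      rwa [mul_div_cancel_left₀ _ ht.ne'] at this
    rcases mem_nhdsGT_iff_exists_Ioo_subset.1 hev with ⟨δ₂, hδ₂, hsub⟩
    exact ⟨δ₂, hδ₂, fun t ht => hsub ht⟩
  -- w vanishes on (0, δ₂)
  have hw0 : ∀ t ∈ Set.Ioo (0:ℝ) δ₂, w t = 0 := by
    have hanti : AntitoneOn (fun t => (w t)^2) (Set.Ioo 0 δ₂) := by
      apply antitoneOn_of_hasDerivWithinAt_nonpos (f' := fun t => 2 * w t * (-(h t) * w t))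
        (convex_Ioo 0 δ₂)
      · intro x hx
        exact ((hw' x hx.1).continuousAt.pow 2).continuousWithinAt
      · intro x hx
        rw [interior_Ioo] at hx
        have : HasDerivWithinAt (fun t => w t ^ 2) ((2:ℕ) * w x ^ (2 - 1) * (-(h x) * w x)) (interior (Set.Ioo 0 δ₂)) x := ((hw' x hx.1).fun_pow 2).hasDerivWithinAt (s := interior (Set.Ioo 0 δ₂))
        convert this using 1
        ring
      · intro x hx
        rw [interior_Ioo] at hx
        have hh0 : 0 < h x := hδ₂ x hx
        nlinarith [sq_nonneg (w x)]
    intro t ht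
    have hle : (w t)^2 ≤ 0 := by
      have hev : ∀ᶠ s in nhdsWithin 0 (Set.Ioi 0), (w t)^2 ≤ (w s)^2 := by
        have hmem : Set.Ioo (0:ℝ) t ∈ nhdsWithin 0 (Set.Ioi 0) :=
          mem_nhdsGT_iff_exists_Ioo_subset.2 ⟨t, ht.1, subset_rfl⟩
        filter_upwards [hmem] with s hs
        exact hanti ⟨hs.1, lt_trans hs.2 ht.2⟩ ht (le_of_lt hs.2)
      have hlim2 : Tendsto (fun s => (w s)^2) (nhdsWithin 0 (Set.Ioi 0)) (nhds 0) := by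
        have := hwlim.pow 2
        simpa using this
      exact ge_of_tendsto hlim2 hev
    have : (w t)^2 = 0 := le_antisymm hle (sq_nonneg _)
    exact pow_eq_zero_iff (by norm_num) |>.1 this
  -- Grönwall extension to all positive times
  have hwzero : ∀ t ∈ Set.Ioi (0:ℝ), w t = 0 := by
    intro b hb
    by_cases hbδ : b < δ₂
    · exact hw0 b ⟨hb, hbδ⟩
    push_neg at hbδ
    set a : ℝ := δ₂ / 2 with hadef
    have ha0 : 0 < a := by positivity
    have haδ : a < δ₂ := by linarith
    have hab : a ≤ b := le_trans (le_of_lt haδ) hbδ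
    have hsub : Set.Icc a b ⊆ Set.Ioi (0:ℝ) := fun x hx => lt_of_lt_of_le ha0 hx.1
    -- bound |h| on [a,b]
    obtain ⟨K, hK⟩ : ∃ K, ∀ x ∈ Set.Icc a b, ‖h x‖ ≤ K := by
      apply (isCompact_Icc).exists_bound_of_continuousOn
      exact fun x hx => ((hh' x (hsub hx)).continuousAt).continuousWithinAt
    have hwcont : ContinuousOn w (Set.Icc a b) :=
      fun x hx => ((hw' x (hsub hx)).continuousAt).continuousWithinAt
    have hbound := norm_le_gronwallBound_of_norm_deriv_right_le (δ := 0) (K := K) (ε := 0)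
      (f := w) (f' := fun s => -(h s) * w s) (a := a) (b := b) hwcont
      (fun x hx => ((hw' x (hsub ⟨hx.1, le_of_lt hx.2⟩)).hasDerivWithinAt))
      (by
        have : w a = 0 := hw0 a ⟨ha0, haδ⟩
        simp [this])
      (by
        intro x hx
        have hxI : x ∈ Set.Icc a b := ⟨hx.1, le_of_lt hx.2⟩
        have := hK x hxI
        have hnn : ‖w x‖ ≥ 0 := norm_nonneg _
        calc ‖-(h x) * w x‖ = ‖h x‖ * ‖w x‖ := by rw [norm_mul, norm_neg]
          _ ≤ K * ‖w x‖ + 0 := by nlinarith)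
    have := hbound b ⟨hab, le_refl b⟩
    rw [gronwallBound_ε0_δ0] at this
    exact norm_le_zero_iff.1 this
  -- conclude
  intro t ht
  have hw := hwzero t ht
  have hu : u t ≠ 0 := (hupos t ht).ne'
  simp only [hwdef] at hw
  rw [eq_div_iff hu]
  linarith
end

section
/- Let q be a nonnegative continuous function on [0,∞) with ∫₀^∞ t·q(t) dt < ∞, let h ∈ C¹((0,∞)) solve h' + h² − q = 0 with lim_{t→0⁺} t·h(t) = 1, and let v ∈ C²((0,∞)) solve v'' + h·v' = 0 with v' > 0 and lim_{t→0⁺} v(t)/log t = 1. Then the limit lim_{t→∞} v(t)/log t exists and satisfies 1/I(q) ≤ lim_{t→∞} v(t)/log t ≤ 1, where I(q) = exp(∫₀^∞ s·q(s) ds). Moreover, for every t > 1 one has (1/I(q))·log t + v(1) ≤ v(t) ≤ log t + v(1). -/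
/-!
Write `m t = t * h t` and `f t = t * v' t`. The Riccati equation gives
`(m - 1)' + h * (m - 1) = t * q ≥ 0`, so with the integrating factor `exp ∫ h` and `m → 1` at `0⁺`
we get `m ≥ 1`, whence `f' = v' * (1 - m) ≤ 0`. Comparing `v` with `c * log t` on intervals where
`c` bounds `f`, the hypothesis `v t / log t → 1` at `0⁺` forces `f ≤ 1` and `f → 1` at `0⁺`.
Moreover `log f - m + ∫₀ᵗ s q(s) ds` has derivative `(m - 1)² / t ≥ 0` and tends to `-1` at `0⁺`,
so `f ≥ exp (-∫₀^∞ s q(s) ds)`. Hence `f` decreases to a limit `α ∈ [1/I(q), 1]`, the same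
comparison gives `v t / log t → α` at `∞`, and `1/I(q) ≤ f ≤ 1` on `[1, t]` gives the bounds on `v t`.
-/

open MeasureTheory Set Filter Topology Real

lemma monotoneOn_of_hasDerivAt_nonneg {D : Set ℝ} (hD : Convex ℝ D) {f f' : ℝ → ℝ}
    (hf : ∀ x ∈ D, HasDerivAt f (f' x) x) (hf' : ∀ x ∈ D, 0 ≤ f' x) : MonotoneOn f D :=
  monotoneOn_of_hasDerivWithinAt_nonneg hD
    (fun x hx => (hf x hx).continuousAt.continuousWithinAt)
    (fun x hx => (hf x (interior_subset hx)).hasDerivWithinAt)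
    (fun x hx => hf' x (interior_subset hx))

lemma antitoneOn_of_hasDerivAt_nonpos {D : Set ℝ} (hD : Convex ℝ D) {f f' : ℝ → ℝ}
    (hf : ∀ x ∈ D, HasDerivAt f (f' x) x) (hf' : ∀ x ∈ D, f' x ≤ 0) : AntitoneOn f D :=
  antitoneOn_of_hasDerivWithinAt_nonpos hD
    (fun x hx => (hf x hx).continuousAt.continuousWithinAt)
    (fun x hx => (hf x (interior_subset hx)).hasDerivWithinAt)
    (fun x hx => hf' x (interior_subset hx))

lemma MonotoneOn.le_of_tendsto_nhdsGT {f : ℝ → ℝ} {a b L : ℝ} (hf : MonotoneOn f (Ioi a))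
    (hL : Tendsto f (𝓝[>] a) (𝓝 L)) (hb : a < b) : L ≤ f b :=
  le_of_tendsto hL (mem_of_superset (Ioo_mem_nhdsGT hb) fun _ hx => hf hx.1 hb hx.2.le)

lemma AntitoneOn.exists_tendsto_atTop {f : ℝ → ℝ} {a : ℝ} (hf : AntitoneOn f (Ioi a))
    (hb : BddBelow (f '' Ioi a)) : ∃ L, Tendsto f atTop (𝓝 L) :=
  ⟨_, tendsto_comp_val_Ioi_atTop.1 <| tendsto_atTop_ciInf (fun x y hxy => hf x.2 y.2 hxy)
    (by rwa [image_eq_range] at hb)⟩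

lemma ContinuousOn.hasDerivAt_intervalIntegral {g : ℝ → ℝ} {s : Set ℝ} {a t : ℝ}
    (hg : ContinuousOn g s) (hs : s.OrdConnected) (ha : a ∈ s) (ht : s ∈ 𝓝 t) :
    HasDerivAt (fun x => ∫ r in a..x, g r) (g t) t :=
  intervalIntegral.integral_hasDerivAt_right
    (hg.mono (hs.uIcc_subset ha (mem_of_mem_nhds ht))).intervalIntegrable
    ((hg.mono interior_subset).stronglyMeasurableAtFilter isOpen_interior t
      (mem_interior_iff_mem_nhds.2 ht))
    (hg.continuousAt ht)

lemma ContinuousOn.tendsto_intervalIntegral_nhdsGT {g : ℝ → ℝ} {a : ℝ}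
    (hg : ContinuousOn g (Ici a)) :
    Tendsto (fun x => ∫ r in a..x, g r) (𝓝[>] a) (𝓝 0) := by
  have hcont := intervalIntegral.continuousOn_primitive_interval (μ := volume)
    ((hg.mono (ordConnected_Ici.uIcc_subset (mem_Ici.2 le_rfl)
      (mem_Ici.2 (by linarith)))).integrableOn_compact
      isCompact_uIcc) (a := a) (b := a + 1)
  have := (hcont a left_mem_uIcc).mono_of_mem_nhdsWithin
    (by rw [uIcc_of_le (by linarith)]; exact Icc_mem_nhdsGT (by linarith))
  simpa using this.tendsto

lemma tendsto_add_mul_div_self_of_tendsto_abs {ι : Type*} {l : Filter ι} {g : ι → ℝ}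
    (hg : Tendsto (fun x => |g x|) l atTop) (C c : ℝ) :
    Tendsto (fun x => (C + c * g x) / g x) l (𝓝 c) := by
  have hinv : Tendsto (fun x => (g x)⁻¹) l (𝓝 0) := by
    rw [tendsto_zero_iff_abs_tendsto_zero]
    exact hg.inv_tendsto_atTop.congr fun x => (abs_inv (g x)).symm
  have hne : ∀ᶠ x in l, g x ≠ 0 := (hg.eventually_gt_atTop 0).mono fun _ hx => abs_pos.1 hx
  have := (hinv.const_mul C).add_const c
  rw [mul_zero, zero_add] at this
  refine this.congr' (hne.mono fun x hx => ?_)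
  field_simp

section LogComparison

variable {v v' : ℝ → ℝ}

lemma mul_log_sub_le_sub_of_le_mul_deriv {c s t : ℝ} (hs : 0 < s) (hst : s ≤ t)
    (hv : ∀ x ∈ Icc s t, HasDerivAt v (v' x) x) (hc : ∀ x ∈ Icc s t, c ≤ x * v' x) :
    c * (log t - log s) ≤ v t - v s := by
  have hmono : MonotoneOn (fun x => v x - c * log x) (Icc s t) :=
    monotoneOn_of_hasDerivAt_nonneg (convex_Icc s t)
      (fun x hx => (hv x hx).sub ((hasDerivAt_log (hs.trans_le hx.1).ne').const_mul c))
      (fun x hx => by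
        rw [sub_nonneg, ← div_eq_mul_inv, div_le_iff₀ (hs.trans_le hx.1), mul_comm]
        exact hc x hx)
  have := hmono (left_mem_Icc.2 hst) (right_mem_Icc.2 hst) hst
  linarith

lemma sub_le_mul_log_sub_of_mul_deriv_le {c s t : ℝ} (hs : 0 < s) (hst : s ≤ t)
    (hv : ∀ x ∈ Icc s t, HasDerivAt v (v' x) x) (hc : ∀ x ∈ Icc s t, x * v' x ≤ c) :
    v t - v s ≤ c * (log t - log s) := by
  have := mul_log_sub_le_sub_of_le_mul_deriv (v := -v) (v' := -v') (c := -c) hs hst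
    (fun x hx => (hv x hx).neg) (fun x hx => by simpa using hc x hx)
  simp only [Pi.neg_apply] at this
  linarith

lemma le_of_le_mul_deriv_of_tendsto_div_log {a c t : ℝ} (ht : 0 < t)
    (hv : ∀ x ∈ Ioc 0 t, HasDerivAt v (v' x) x) (hc : ∀ x ∈ Ioc 0 t, c ≤ x * v' x)
    (hlim : Tendsto (fun x => v x / log x) (𝓝[>] 0) (𝓝 a)) : c ≤ a := by
  refine le_of_tendsto_of_tendsto (tendsto_add_mul_div_self_of_tendsto_abs
    (tendsto_abs_atBot_atTop.comp tendsto_log_nhdsGT_zero) (v t - c * log t) c) hlim ?_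
  filter_upwards [Ioo_mem_nhdsGT (lt_min ht one_pos)] with s ⟨hs, hs_lt⟩
  have hst : Icc s t ⊆ Ioc 0 t := Icc_subset_Ioc hs le_rfl
  have := mul_log_sub_le_sub_of_le_mul_deriv hs (hs_lt.le.trans (min_le_left _ _))
    (fun x hx => hv x (hst hx)) (fun x hx => hc x (hst hx))
  exact div_le_div_of_nonpos_of_le (log_neg hs (hs_lt.trans_le (min_le_right _ _))).le
    (by linarith)

lemma le_of_mul_deriv_le_of_tendsto_div_log {a c t : ℝ} (ht : 0 < t)
    (hv : ∀ x ∈ Ioc 0 t, HasDerivAt v (v' x) x) (hc : ∀ x ∈ Ioc 0 t, x * v' x ≤ c)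
    (hlim : Tendsto (fun x => v x / log x) (𝓝[>] 0) (𝓝 a)) : a ≤ c := by
  have := le_of_le_mul_deriv_of_tendsto_div_log (v := -v) (v' := -v') (a := -a) (c := -c) ht
    (fun x hx => (hv x hx).neg) (fun x hx => by simpa using hc x hx)
    (by simpa only [Pi.neg_apply, neg_div] using hlim.neg)
  linarith

lemma mul_deriv_le_of_antitoneOn {a t : ℝ} (hv : ∀ x ∈ Ioi 0, HasDerivAt v (v' x) x)
    (hanti : AntitoneOn (fun x => x * v' x) (Ioi 0))
    (hlim : Tendsto (fun x => v x / log x) (𝓝[>] 0) (𝓝 a)) (ht : 0 < t) : t * v' t ≤ a :=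
  le_of_le_mul_deriv_of_tendsto_div_log ht (fun x hx => hv x hx.1)
    (fun _ hx => hanti hx.1 ht hx.2) hlim

lemma tendsto_mul_deriv_nhdsGT_of_antitoneOn {a : ℝ} (hv : ∀ x ∈ Ioi 0, HasDerivAt v (v' x) x)
    (hanti : AntitoneOn (fun x => x * v' x) (Ioi 0))
    (hlim : Tendsto (fun x => v x / log x) (𝓝[>] 0) (𝓝 a)) :
    Tendsto (fun x => x * v' x) (𝓝[>] 0) (𝓝 a) := by
  refine tendsto_order.2 ⟨fun b hb => ?_, fun b hb => ?_⟩
  · obtain ⟨s, hs, hbs⟩ : ∃ s ∈ Ioi (0:ℝ), b < s * v' s := by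
      by_contra! H
      exact hb.not_ge (le_of_mul_deriv_le_of_tendsto_div_log one_pos
        (fun x hx => hv x hx.1) (fun x hx => H x hx.1) hlim)
    filter_upwards [Ioo_mem_nhdsGT hs] with x hx
    exact hbs.trans_le (hanti hx.1 hs hx.2.le)
  · filter_upwards [self_mem_nhdsWithin] with x hx
    exact (mul_deriv_le_of_antitoneOn hv hanti hlim hx).trans_lt hb

lemma eventually_lt_div_log_of_tendsto_mul_deriv {a α : ℝ}
    (hv : ∀ᶠ x in atTop, HasDerivAt v (v' x) x)
    (hf : Tendsto (fun x => x * v' x) atTop (𝓝 α)) (ha : a < α) :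
    ∀ᶠ x in atTop, a < v x / log x := by
  obtain ⟨b, hab, hbα⟩ := exists_between ha
  obtain ⟨R, hR⟩ := eventually_atTop.1
    ((hv.and (hf.eventually (eventually_ge_nhds hbα))).and (eventually_ge_atTop 1))
  have hR1 : 1 ≤ R := (hR R le_rfl).2
  have hlim := tendsto_add_mul_div_self_of_tendsto_abs
    (tendsto_abs_atTop_atTop.comp tendsto_log_atTop) (v R - b * log R) b
  filter_upwards [hlim.eventually (eventually_gt_nhds hab), eventually_gt_atTop R] with t hat hRt
  have := mul_log_sub_le_sub_of_le_mul_deriv (zero_lt_one.trans_le hR1) hRt.le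
    (fun x hx => (hR x hx.1).1.1) (fun x hx => (hR x hx.1).1.2)
  exact hat.trans_le (div_le_div_of_nonneg_right (by linarith)
    (log_pos (hR1.trans_lt hRt)).le)

lemma tendsto_div_log_atTop_of_tendsto_mul_deriv {α : ℝ}
    (hv : ∀ᶠ x in atTop, HasDerivAt v (v' x) x)
    (hf : Tendsto (fun x => x * v' x) atTop (𝓝 α)) :
    Tendsto (fun x => v x / log x) atTop (𝓝 α) := by
  refine tendsto_order.2 ⟨fun a ha => eventually_lt_div_log_of_tendsto_mul_deriv hv hf ha,
    fun b hb => ?_⟩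
  have := eventually_lt_div_log_of_tendsto_mul_deriv (v := -v) (v' := -v')
    (hv.mono fun x hx => hx.neg) (by simpa using hf.neg) (neg_lt_neg hb)
  filter_upwards [this] with x hx
  simp only [Pi.neg_apply, neg_div, neg_lt_neg_iff] at hx
  exact hx

end LogComparison

lemma nonneg_of_hasDerivAt_add_mul_nonneg {w w' h : ℝ → ℝ} {t : ℝ}
    (hw : ∀ x ∈ Ioi 0, HasDerivAt w (w' x) x) (hh : ContinuousOn h (Ioi 0))
    (hh0 : ∀ᶠ x in 𝓝[>] 0, 0 ≤ h x) (hw' : ∀ x ∈ Ioi 0, 0 ≤ w' x + h x * w x)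
    (hw0 : Tendsto w (𝓝[>] 0) (𝓝 0)) (ht : 0 < t) : 0 ≤ w t := by
  set H : ℝ → ℝ := fun x => ∫ r in (1:ℝ)..x, h r
  have hH : ∀ x ∈ Ioi (0:ℝ), HasDerivAt H (h x) x := fun x hx =>
    hh.hasDerivAt_intervalIntegral ordConnected_Ioi (mem_Ioi.2 one_pos) (Ioi_mem_nhds hx)
  have hmono : MonotoneOn (fun x => exp (H x) * w x) (Ioi 0) :=
    monotoneOn_of_hasDerivAt_nonneg (convex_Ioi 0) (fun x hx => (hH x hx).exp.mul (hw x hx))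
      (fun x hx => by nlinarith [mul_nonneg (exp_pos (H x)).le (hw' x hx)])
  obtain ⟨δ, hδ, hδh⟩ := (nhdsGT_basis (0:ℝ)).eventually_iff.1 hh0
  have hH_mono : MonotoneOn H (Ioo 0 δ) :=
    monotoneOn_of_hasDerivAt_nonneg (convex_Ioo 0 δ) (fun x hx => hH x hx.1) hδh
  have hbdd : IsBoundedUnder (· ≤ ·) (𝓝[>] 0) (norm ∘ fun x => exp (H x)) := by
    refine isBoundedUnder_of_eventually_le (a := exp (H (δ / 2))) ?_
    filter_upwards [Ioo_mem_nhdsGT (half_pos hδ)] with x hx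
    rw [Function.comp_apply, norm_of_nonneg (exp_pos _).le, exp_le_exp]
    exact hH_mono ⟨hx.1, hx.2.trans (half_lt_self hδ)⟩ ⟨half_pos hδ, half_lt_self hδ⟩ hx.2.le
  have := hmono.le_of_tendsto_nhdsGT (isBoundedUnder_le_mul_tendsto_zero hbdd hw0) ht
  exact (mul_nonneg_iff_of_pos_left (exp_pos _)).1 this

section Riccati

variable {q h h' v' v'' : ℝ → ℝ}

lemma one_le_mul_of_riccati (hh' : ∀ t ∈ Ioi 0, HasDerivAt h (h' t) t)
    (hq : ∀ t ∈ Ioi 0, 0 ≤ q t) (hric : ∀ t ∈ Ioi 0, h' t + h t ^ 2 - q t = 0)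
    (hlim : Tendsto (fun t => t * h t) (𝓝[>] 0) (𝓝 1)) {t : ℝ} (ht : 0 < t) :
    1 ≤ t * h t := by
  have hh0 : ∀ᶠ x in 𝓝[>] 0, 0 ≤ h x := by
    filter_upwards [hlim.eventually (eventually_gt_nhds one_pos), self_mem_nhdsWithin]
      with x hx (hx0 : 0 < x)
    exact (pos_of_mul_pos_right hx hx0.le).le
  have := nonneg_of_hasDerivAt_add_mul_nonneg (w := fun x => x * h x - 1)
    (w' := fun x => h x + x * h' x)
    (fun x hx => by simpa using ((hasDerivAt_id x).mul (hh' x hx)).sub_const 1)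
    (fun x hx => (hh' x hx).continuousAt.continuousWithinAt) hh0
    (fun x hx => by
      calc 0 ≤ x * q x := mul_nonneg (le_of_lt hx) (hq x hx)
        _ = _ := by linear_combination (-x) * hric x hx)
    (by simpa using hlim.sub_const 1) ht
  linarith

lemma hasDerivAt_mul_deriv {t : ℝ} (hv'' : HasDerivAt v' (v'' t) t)
    (hode : v'' t + h t * v' t = 0) :
    HasDerivAt (fun x => x * v' x) (v' t * (1 - t * h t)) t :=
  ((hasDerivAt_id t).mul hv'').congr_deriv (by simp only [id]; linear_combination t * hode)

lemma antitoneOn_mul_deriv (hv'' : ∀ t ∈ Ioi 0, HasDerivAt v' (v'' t) t)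
    (hode : ∀ t ∈ Ioi 0, v'' t + h t * v' t = 0) (hpos : ∀ t ∈ Ioi 0, 0 < v' t)
    (hm : ∀ t ∈ Ioi 0, 1 ≤ t * h t) : AntitoneOn (fun x => x * v' x) (Ioi 0) :=
  antitoneOn_of_hasDerivAt_nonpos (convex_Ioi 0)
    (fun t ht => hasDerivAt_mul_deriv (hv'' t ht) (hode t ht))
    (fun t ht => mul_nonpos_of_nonneg_of_nonpos (hpos t ht).le (by linarith [hm t ht]))

lemma exp_neg_integral_le_mul_deriv (hq_cont : ContinuousOn q (Ici 0))
    (hq_nonneg : ∀ t ∈ Ici (0:ℝ), 0 ≤ q t) (hq_int : IntegrableOn (fun t => t * q t) (Ici 0))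
    (hh' : ∀ t ∈ Ioi 0, HasDerivAt h (h' t) t) (hric : ∀ t ∈ Ioi 0, h' t + h t ^ 2 - q t = 0)
    (hlimh : Tendsto (fun t => t * h t) (𝓝[>] 0) (𝓝 1))
    (hv'' : ∀ t ∈ Ioi 0, HasDerivAt v' (v'' t) t) (hode : ∀ t ∈ Ioi 0, v'' t + h t * v' t = 0)
    (hpos : ∀ t ∈ Ioi 0, 0 < v' t) (hm : ∀ t ∈ Ioi 0, 1 ≤ t * h t)
    (hf : Tendsto (fun t => t * v' t) (𝓝[>] 0) (𝓝 1)) {t : ℝ} (ht : 0 < t) :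
    exp (-∫ s in Ici 0, s * q s) ≤ t * v' t := by
  set Q : ℝ → ℝ := fun x => ∫ r in (0:ℝ)..x, r * q r
  have hqc : ContinuousOn (fun r => r * q r) (Ici 0) := continuousOn_id.mul hq_cont
  have hmono : MonotoneOn (fun x => log (x * v' x) - x * h x + Q x) (Ioi 0) := by
    refine monotoneOn_of_hasDerivAt_nonneg (convex_Ioi 0) (f' := fun x => (x * h x - 1) ^ 2 / x)
      (fun x hx => ?_) (fun x hx => div_nonneg (sq_nonneg _) (le_of_lt hx))
    have hx0 : 0 < x := hx
    have hvx := hpos x hx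
    refine (((hasDerivAt_mul_deriv (hv'' x hx) (hode x hx)).log
      (mul_pos hx0 hvx).ne').sub ((hasDerivAt_id' x).mul (hh' x hx))).add
      (hqc.hasDerivAt_intervalIntegral ordConnected_Ici (mem_Ici.2 le_rfl) (Ici_mem_nhds hx0))
      |>.congr_deriv ?_
    field_simp
    linear_combination (-x ^ 2) * hric x hx
  have hlim : Tendsto (fun x => log (x * v' x) - x * h x + Q x) (𝓝[>] 0) (𝓝 (-1)) := by
    have := (((continuousAt_log one_ne_zero).tendsto.comp hf).sub hlimh).add
      hqc.tendsto_intervalIntegral_nhdsGT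
    simpa using this
  have hQ : Q t ≤ ∫ s in Ici 0, s * q s := by
    change ∫ r in (0:ℝ)..t, r * q r ≤ _
    rw [intervalIntegral.integral_of_le ht.le]
    refine setIntegral_mono_set hq_int ?_ (Ioc_subset_Ioi_self.trans Ioi_subset_Ici_self).eventuallyLE
    filter_upwards [ae_restrict_mem measurableSet_Ici] with x hx
    exact mul_nonneg hx (hq_nonneg x hx)
  have := hmono.le_of_tendsto_nhdsGT hlim ht
  rw [← exp_log (mul_pos ht (hpos t ht)), exp_le_exp]
  linarith [hm t ht]

end Riccati

theorem stmt7_general (q h h' v v' v'' : ℝ → ℝ)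
    (hq_cont : ContinuousOn q (Set.Ici 0))
    (hq_nonneg : ∀ t ∈ Set.Ici (0:ℝ), 0 ≤ q t)
    (hq_int : MeasureTheory.IntegrableOn (fun t => t * q t) (Set.Ici 0))
    (hh' : ∀ t ∈ Set.Ioi (0:ℝ), HasDerivAt h (h' t) t)
    (hric : ∀ t ∈ Set.Ioi (0:ℝ), h' t + (h t)^2 - q t = 0)
    (hlimh : Filter.Tendsto (fun t => t * h t) (nhdsWithin 0 (Set.Ioi 0)) (nhds 1))
    (hv' : ∀ t ∈ Set.Ioi (0:ℝ), HasDerivAt v (v' t) t)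
    (hv'' : ∀ t ∈ Set.Ioi (0:ℝ), HasDerivAt v' (v'' t) t)
    (hodev : ∀ t ∈ Set.Ioi (0:ℝ), v'' t + h t * v' t = 0)
    (hv'_pos : ∀ t ∈ Set.Ioi (0:ℝ), 0 < v' t)
    (hlimv : Filter.Tendsto (fun t => v t / Real.log t) (nhdsWithin 0 (Set.Ioi 0)) (nhds 1)) :
    (∃ α : ℝ, Filter.Tendsto (fun t => v t / Real.log t) Filter.atTop (nhds α) ∧
        1 / Real.exp (∫ s in Set.Ici (0:ℝ), s * q s) ≤ α ∧ α ≤ 1) ∧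
      ∀ t > (1:ℝ),
        (1 / Real.exp (∫ s in Set.Ici (0:ℝ), s * q s)) * Real.log t + v 1 ≤ v t ∧
          v t ≤ Real.log t + v 1 := by
  have hm : ∀ t ∈ Ioi (0:ℝ), 1 ≤ t * h t := fun t ht =>
    one_le_mul_of_riccati hh' (fun s hs => hq_nonneg s (Ioi_subset_Ici_self hs)) hric hlimh ht
  have hanti := antitoneOn_mul_deriv hv'' hodev hv'_pos hm
  have hle : ∀ t ∈ Ioi (0:ℝ), t * v' t ≤ 1 := fun t ht =>
    mul_deriv_le_of_antitoneOn hv' hanti hlimv ht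
  have hge : ∀ t ∈ Ioi (0:ℝ), exp (-∫ s in Ici 0, s * q s) ≤ t * v' t := fun t ht =>
    exp_neg_integral_le_mul_deriv hq_cont hq_nonneg hq_int hh' hric hlimh hv'' hodev hv'_pos hm
      (tendsto_mul_deriv_nhdsGT_of_antitoneOn hv' hanti hlimv) ht
  obtain ⟨α, hα⟩ := hanti.exists_tendsto_atTop ⟨_, forall_mem_image.2 hge⟩
  have hv'_Icc : ∀ t, ∀ x ∈ Icc 1 t, HasDerivAt v (v' x) x := fun t x hx =>
    hv' x (one_pos.trans_le hx.1)
  rw [one_div, ← exp_neg]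
  refine ⟨⟨α, tendsto_div_log_atTop_of_tendsto_mul_deriv
    ((eventually_gt_atTop 0).mono hv') hα, ge_of_tendsto hα ?_, le_of_tendsto hα ?_⟩,
    fun t ht => ⟨?_, ?_⟩⟩
  · filter_upwards [eventually_gt_atTop 0] with x hx using hge x hx
  · filter_upwards [eventually_gt_atTop 0] with x hx using hle x hx
  · have := mul_log_sub_le_sub_of_le_mul_deriv one_pos ht.le (hv'_Icc t)
      (fun x hx => hge x (one_pos.trans_le hx.1))
    rw [log_one] at this
    linarith
  · have := sub_le_mul_log_sub_of_mul_deriv_le one_pos ht.le (hv'_Icc t)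
      (fun x hx => hle x (one_pos.trans_le hx.1))
    rw [log_one] at this
    linarith

/-- Let `q` be a nonnegative continuous function on `[0,∞)` with
`∫₀^∞ t·q t dt < ∞` and set `I(q) = exp(∫₀^∞ s·q s ds)`. Let `h ∈ C¹((0,∞))` solve
`h' + h² − q = 0` with `lim_{t→0⁺} t·h t = 1`, and let `v ∈ C²((0,∞))` solve
`v'' + h·v' = 0` with `v' > 0` and `lim_{t→0⁺} v t / log t = 1`. Then
`lim_{t→∞} v t / log t` exists and lies in `[1/I(q), 1]`, and for every `t > 1`,
`(1/I(q))·log t + v 1 ≤ v t ≤ log t + v 1`. -/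
theorem stmt7 (q h h' v v' v'' : ℝ → ℝ)
    (hq_cont : ContinuousOn q (Set.Ici 0))
    (hq_nonneg : ∀ t ∈ Set.Ici (0:ℝ), 0 ≤ q t)
    (hq_int : MeasureTheory.IntegrableOn (fun t => t * q t) (Set.Ici 0))
    (hh' : ∀ t ∈ Set.Ioi (0:ℝ), HasDerivAt h (h' t) t)
    (hh'_cont : ContinuousOn h' (Set.Ioi 0))
    (hric : ∀ t ∈ Set.Ioi (0:ℝ), h' t + (h t)^2 - q t = 0)
    (hlimh : Filter.Tendsto (fun t => t * h t) (nhdsWithin 0 (Set.Ioi 0)) (nhds 1))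
    (hv' : ∀ t ∈ Set.Ioi (0:ℝ), HasDerivAt v (v' t) t)
    (hv'' : ∀ t ∈ Set.Ioi (0:ℝ), HasDerivAt v' (v'' t) t)
    (hv''_cont : ContinuousOn v'' (Set.Ioi 0))
    (hodev : ∀ t ∈ Set.Ioi (0:ℝ), v'' t + h t * v' t = 0)
    (hv'_pos : ∀ t ∈ Set.Ioi (0:ℝ), 0 < v' t)
    (hlimv : Filter.Tendsto (fun t => v t / Real.log t) (nhdsWithin 0 (Set.Ioi 0)) (nhds 1)) :
    (∃ α : ℝ, Filter.Tendsto (fun t => v t / Real.log t) Filter.atTop (nhds α) ∧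
        1 / Real.exp (∫ s in Set.Ici (0:ℝ), s * q s) ≤ α ∧ α ≤ 1) ∧
      ∀ t > (1:ℝ),
        (1 / Real.exp (∫ s in Set.Ici (0:ℝ), s * q s)) * Real.log t + v 1 ≤ v t ∧
          v t ≤ Real.log t + v 1 :=
  stmt7_general q h h' v v' v'' hq_cont hq_nonneg hq_int hh' hric hlimh hv' hv'' hodev hv'_pos hlimv
end

section
/- Let l > 0, let h be a continuous function on (0, l], and fix δ ∈ (0, l). Define w_δ(t) = ( ∫₀ᵗ exp( 2·∫_{τ+δ}^{t+δ} h(s) ds ) dτ )⁻¹ for t ∈ (0, l − δ]. Then w_δ(t) > 0 for all t ∈ (0, l − δ], w_δ is continuously differentiable on (0, l − δ] and satisfies w_δ'(t) + w_δ(t)² + 2·h(t + δ)·w_δ(t) = 0 there, and lim_{t→0⁺} t·w_δ(t) = 1. -/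
open MeasureTheory Set Filter intervalIntegral

/-! Extend `h` continuously from `[δ, l]` to `ℝ` and let `H` be a primitive of `h(· + δ)`.
Then `1 / w = K` with `K t = ∫₀ᵗ exp (2 (H t - H τ)) dτ = exp (2 H t) ∫₀ᵗ exp (-2 H τ) dτ`,
which satisfies the linear equation `K' = 2 h(· + δ) K + 1` with `K 0 = 0`. Hence `w = K⁻¹`
solves the Riccati equation, and `t / K t → 1 / K'(0) = 1`. -/

noncomputable section

def riccatiKernel (H : ℝ → ℝ) (t : ℝ) : ℝ :=
  ∫ τ in (0 : ℝ)..t, Real.exp (2 * (H t - H τ))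

namespace riccatiKernel

variable {H g : ℝ → ℝ}

theorem eq_exp_mul_integral (H : ℝ → ℝ) (t : ℝ) :
    riccatiKernel H t = Real.exp (2 * H t) * ∫ τ in (0 : ℝ)..t, Real.exp (-2 * H τ) := by
  rw [riccatiKernel, ← intervalIntegral.integral_const_mul]
  congr 1 with τ
  rw [← Real.exp_add]
  ring_nf

@[simp]
theorem zero (H : ℝ → ℝ) : riccatiKernel H 0 = 0 := by
  simp [riccatiKernel]

theorem pos (hH : Continuous H) {t : ℝ} (ht : 0 < t) : 0 < riccatiKernel H t := by
  have hint : Continuous fun τ => Real.exp (2 * (H t - H τ)) := by fun_prop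
  exact intervalIntegral_pos_of_pos (hint.intervalIntegrable _ _) (fun _ => Real.exp_pos _) ht

theorem hasDerivAt (hH : ∀ t, HasDerivAt H (g t) t) (t : ℝ) :
    HasDerivAt (riccatiKernel H) (2 * g t * riccatiKernel H t + 1) t := by
  have hHc : Continuous H := continuous_iff_continuousAt.2 fun t => (hH t).continuousAt
  have hint : Continuous fun τ => Real.exp (-2 * H τ) := by fun_prop
  have hG : HasDerivAt (fun t => ∫ τ in (0 : ℝ)..t, Real.exp (-2 * H τ))
      (Real.exp (-2 * H t)) t :=
    integral_hasDerivAt_right (hint.intervalIntegrable _ _)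
      hint.aestronglyMeasurable.stronglyMeasurableAtFilter hint.continuousAt
  have hE := ((hH t).const_mul 2).exp
  rw [funext (eq_exp_mul_integral H)]
  refine (hE.mul hG).congr_deriv ?_
  rw [mul_assoc, ← Real.exp_add, show 2 * H t + -2 * H t = 0 by ring, Real.exp_zero]
  ring

theorem hasDerivAt_inv (hH : ∀ t, HasDerivAt H (g t) t) {t : ℝ} (ht : 0 < t) :
    HasDerivAt (fun t => (riccatiKernel H t)⁻¹)
      (-(riccatiKernel H t)⁻¹ ^ 2 - 2 * g t * (riccatiKernel H t)⁻¹) t := by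
  have hK := (pos (continuous_iff_continuousAt.2 fun t => (hH t).continuousAt) ht).ne'
  refine ((hasDerivAt hH t).inv hK).congr_deriv ?_
  field_simp
  ring

theorem tendsto_mul_inv (hH : ∀ t, HasDerivAt H (g t) t) :
    Tendsto (fun t => t * (riccatiKernel H t)⁻¹) (nhdsWithin 0 (Ioi 0)) (nhds 1) := by
  have hslope := (hasDerivAt hH 0).tendsto_slope_zero_right
  simp only [zero, mul_zero, zero_add, sub_zero, smul_eq_mul] at hslope
  simpa [mul_comm] using hslope.inv₀ one_ne_zero

theorem primitive_add_const_eq {h : ℝ → ℝ} {δ l t : ℝ} (hg : Continuous g)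
    (hgh : EqOn g h (Icc δ l)) (ht : t ∈ Icc 0 (l - δ)) :
    riccatiKernel (fun t => ∫ s in δ..t + δ, g s) t =
      ∫ τ in (0 : ℝ)..t, Real.exp (2 * ∫ s in (τ + δ)..(t + δ), h s) := by
  refine integral_congr fun τ hτ => ?_
  rw [uIcc_of_le ht.1] at hτ
  have hsub : uIcc (τ + δ) (t + δ) ⊆ Icc δ l :=
    uIcc_subset_Icc ⟨by linarith [hτ.1], by linarith [hτ.2, ht.2]⟩
      ⟨by linarith [ht.1], by linarith [ht.2]⟩
  rw [← integral_congr fun s hs => hgh (hsub hs),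
    integral_interval_sub_left (hg.intervalIntegrable _ _) (hg.intervalIntegrable _ _)]

end riccatiKernel

open riccatiKernel in
theorem stmt8_general (l δ : ℝ) (h w : ℝ → ℝ)
    (hh_cont : ContinuousOn h (Set.Ioc 0 l))
    (hδ : δ ∈ Set.Ioo 0 l)
    (hw : ∀ t : ℝ, w t = (∫ τ in (0:ℝ)..t, Real.exp (2 * ∫ s in (τ + δ)..(t + δ), h s))⁻¹) :
    (∀ t ∈ Set.Ioc 0 (l - δ), 0 < w t) ∧
      (∃ w' : ℝ → ℝ, ContinuousOn w' (Set.Ioc 0 (l - δ)) ∧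
        ∀ t ∈ Set.Ioc 0 (l - δ),
          HasDerivWithinAt w (w' t) (Set.Ioc 0 (l - δ)) t ∧
            w' t + (w t)^2 + 2 * h (t + δ) * w t = 0) ∧
      Filter.Tendsto (fun t => t * w t) (nhdsWithin 0 (Set.Ioi 0)) (nhds 1) := by
  obtain ⟨hδ0, hδl⟩ := hδ
  set g := IccExtend hδl.le ((Icc δ l).domRestrict h)
  have hg : Continuous g :=
    continuous_IccExtend_iff.2 (hh_cont.mono (Icc_subset_Ioc hδ0 le_rfl)).domRestrict
  have hgh : EqOn g h (Icc δ l) := fun s hs => IccExtend_of_mem _ _ hs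
  set H := fun t => ∫ s in δ..t + δ, g s
  have hH : ∀ t, HasDerivAt H (g (t + δ)) t := fun t =>
    (integral_hasDerivAt_right (hg.intervalIntegrable _ _)
      hg.aestronglyMeasurable.stronglyMeasurableAtFilter hg.continuousAt).comp_add_const t δ
  have hHc : Continuous H := continuous_iff_continuousAt.2 fun t => (hH t).continuousAt
  have hwK : ∀ t ∈ Icc 0 (l - δ), w t = (riccatiKernel H t)⁻¹ := fun t ht => by
    rw [hw, primitive_add_const_eq hg hgh ht]
  have hderiv : ∀ t ∈ Ioc 0 (l - δ),
      HasDerivWithinAt w (-(w t) ^ 2 - 2 * h (t + δ) * w t) (Ioc 0 (l - δ)) t := by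
    intro t ht
    rw [hwK t (Ioc_subset_Icc_self ht), ← hgh ⟨by linarith [ht.1], by linarith [ht.2]⟩]
    exact (hasDerivAt_inv hH ht.1).hasDerivWithinAt.congr
      (fun y hy => hwK y (Ioc_subset_Icc_self hy)) (hwK t (Ioc_subset_Icc_self ht))
  refine ⟨fun t ht => ?_, ⟨_, ?_, fun t ht => ⟨hderiv t ht, by ring⟩⟩, ?_⟩
  · rw [hwK t (Ioc_subset_Icc_self ht)]
    exact inv_pos.2 (pos hHc ht.1)
  · have hwc : ContinuousOn w (Ioc 0 (l - δ)) := fun t ht => (hderiv t ht).continuousWithinAt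
    have hhc : ContinuousOn (fun t => h (t + δ)) (Ioc 0 (l - δ)) :=
      hh_cont.comp (by fun_prop) fun t ht => ⟨by linarith [ht.1], by linarith [ht.2]⟩
    exact ((hwc.pow 2).neg).sub ((continuousOn_const.mul hhc).mul hwc)
  · refine (tendsto_mul_inv hH).congr' ?_
    filter_upwards [Ioc_mem_nhdsGT (sub_pos.2 hδl)] with t ht
    rw [hwK t (Ioc_subset_Icc_self ht)]

/-- Let `l > 0`, let `h` be continuous on `(0, l]`, fix `δ ∈ (0, l)`,
and define `w t = (∫₀ᵗ exp(2·∫_{τ+δ}^{t+δ} h s ds) dτ)⁻¹` for `t ∈ (0, l − δ]`. Then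
`w > 0` on `(0, l − δ]`, `w` is continuously differentiable on `(0, l − δ]` where it
satisfies `w' + w² + 2·h(·+δ)·w = 0`, and `lim_{t→0⁺} t·w t = 1`. -/
theorem stmt8 (l δ : ℝ) (h w : ℝ → ℝ)
    (hl : 0 < l)
    (hh_cont : ContinuousOn h (Set.Ioc 0 l))
    (hδ : δ ∈ Set.Ioo 0 l)
    (hw : ∀ t : ℝ, w t = (∫ τ in (0:ℝ)..t, Real.exp (2 * ∫ s in (τ + δ)..(t + δ), h s))⁻¹) :
    (∀ t ∈ Set.Ioc 0 (l - δ), 0 < w t) ∧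
      (∃ w' : ℝ → ℝ, ContinuousOn w' (Set.Ioc 0 (l - δ)) ∧
        ∀ t ∈ Set.Ioc 0 (l - δ),
          HasDerivWithinAt w (w' t) (Set.Ioc 0 (l - δ)) t ∧
            w' t + (w t)^2 + 2 * h (t + δ) * w t = 0) ∧
      Filter.Tendsto (fun t => t * w t) (nhdsWithin 0 (Set.Ioi 0)) (nhds 1) :=
  stmt8_general l δ h w hh_cont hδ hw
end
end

section
/- Let l > 0 and let h be a continuous function on (0, l] with lim_{t→0⁺} t·h(t) = 1. Then lim_{δ→0⁺} ∫_δ^l exp( 2·∫_τ^l h(s) ds ) dτ = +∞; equivalently, lim_{δ→0⁺} ( ∫_δ^l exp( 2·∫_τ^l h(s) ds ) dτ )⁻¹ = 0. -/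
open MeasureTheory Set Filter intervalIntegral

/-- Let `l > 0` and let `h` be continuous on `(0, l]` with
`lim_{t→0⁺} t·h t = 1`. Then `∫_δ^l exp(2·∫_τ^l h s ds) dτ → +∞` as `δ → 0⁺`;
equivalently, its inverse tends to `0` as `δ → 0⁺`. -/
theorem stmt9 (l : ℝ) (h : ℝ → ℝ)
    (hl : 0 < l)
    (hh_cont : ContinuousOn h (Set.Ioc 0 l))
    (hlim : Filter.Tendsto (fun t => t * h t) (nhdsWithin 0 (Set.Ioi 0)) (nhds 1)) :
    Filter.Tendsto (fun δ => ∫ τ in δ..l, Real.exp (2 * ∫ s in τ..l, h s))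
        (nhdsWithin 0 (Set.Ioi 0)) Filter.atTop ∧
      Filter.Tendsto (fun δ => (∫ τ in δ..l, Real.exp (2 * ∫ s in τ..l, h s))⁻¹)
        (nhdsWithin 0 (Set.Ioi 0)) (nhds 0) := by
  -- Step 1: choose c with t * h t > 1/2 on (0, c]
  have hev : ∀ᶠ t in nhdsWithin 0 (Set.Ioi 0), (1:ℝ)/2 < t * h t :=
    hlim.eventually (eventually_gt_nhds (by norm_num))
  obtain ⟨u, hu, hsub⟩ := mem_nhdsGT_iff_exists_Ioc_subset.1 hev
  set c : ℝ := min u l with hc_def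
  have hc0 : 0 < c := lt_min hu hl
  have hcl : c ≤ l := min_le_right u l
  have hbound : ∀ t ∈ Set.Ioc 0 c, 1/(2*t) ≤ h t := by
    intro t ht
    have h1 : (1:ℝ)/2 < t * h t := hsub ⟨ht.1, ht.2.trans (min_le_left u l)⟩
    rw [div_le_iff₀ (mul_pos two_pos ht.1)]
    nlinarith [ht.1]
  -- integrability of h on subintervals of (0, l]
  have hint : ∀ a b : ℝ, 0 < a → a ≤ b → b ≤ l → IntervalIntegrable h volume a b := by
    intro a b ha hab hbl
    apply ContinuousOn.intervalIntegrable
    apply hh_cont.mono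
    rw [Set.uIcc_of_le hab]
    exact fun x hx => ⟨lt_of_lt_of_le ha hx.1, hx.2.trans hbl⟩
  -- continuity of g τ = ∫_τ^l h on [a, l] for 0 < a
  set g : ℝ → ℝ := fun τ => ∫ s in τ..l, h s with hg_def
  have hgcont : ∀ a : ℝ, 0 < a → a ≤ l → ContinuousOn g (Set.Icc a l) := by
    intro a ha hal
    have hio : IntegrableOn h (Set.Icc a l) volume :=
      (hh_cont.mono (fun x hx => ⟨lt_of_lt_of_le ha hx.1, hx.2⟩)).integrableOn_Icc
    have := intervalIntegral.continuousOn_primitive_interval_left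
      (f := h) (μ := volume) (a := a) (b := l) (by rwa [Set.uIcc_of_le hal])
    rwa [Set.uIcc_of_le hal] at this
  -- integrability of exp(2*g) on subintervals
  have hintF : ∀ a b : ℝ, 0 < a → a ≤ b → b ≤ l →
      IntervalIntegrable (fun τ => Real.exp (2 * g τ)) volume a b := by
    intro a b ha hab hbl
    apply ContinuousOn.intervalIntegrable
    apply ContinuousOn.mono (s := Set.Icc a l)
    · exact (Real.continuous_exp.comp_continuousOn (continuousOn_const.mul (hgcont a ha (hab.trans hbl))))
    · rw [Set.uIcc_of_le hab]; exact Set.Icc_subset_Icc le_rfl hbl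
  set K : ℝ := ∫ s in c..l, h s with hK
  set E : ℝ := Real.exp (2 * K) with hE
  have hEpos : 0 < E := Real.exp_pos _
  set C0 : ℝ := ∫ τ in c..l, Real.exp (2 * g τ) with hC0
  -- the key lower bound
  have key : ∀ δ ∈ Set.Ioo (0:ℝ) c,
      E * c * (Real.log c - Real.log δ) + C0 ≤ ∫ τ in δ..l, Real.exp (2 * g τ) := by
    intro δ hδ
    obtain ⟨hδ0, hδc⟩ := hδ
    -- split integral
    have hsplit : (∫ τ in δ..c, Real.exp (2 * g τ)) + C0 = ∫ τ in δ..l, Real.exp (2 * g τ) :=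
      intervalIntegral.integral_add_adjacent_intervals
        (hintF δ c hδ0 hδc.le hcl) (hintF c l hc0 hcl le_rfl)
    rw [← hsplit]
    have hpt : ∀ τ ∈ Set.Icc δ c, E * c * (1/τ) ≤ Real.exp (2 * g τ) := by
      intro τ hτ
      have hτ0 : 0 < τ := lt_of_lt_of_le hδ0 hτ.1
      have hgsplit : (∫ s in τ..c, h s) + K = g τ :=
        intervalIntegral.integral_add_adjacent_intervals
          (hint τ c hτ0 hτ.2 hcl) (hint c l hc0 hcl le_rfl)
      have hmono : ∫ s in τ..c, (1:ℝ)/2 * (1/s) ≤ ∫ s in τ..c, h s := by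
        apply intervalIntegral.integral_mono_on hτ.2
        · apply ContinuousOn.intervalIntegrable
          apply ContinuousOn.mono (s := {x : ℝ | x ≠ 0})
          · exact (continuousOn_const.mul (continuousOn_const.div continuousOn_id
              (fun x hx => hx)))
          · rw [Set.uIcc_of_le hτ.2]
            exact fun x hx => ne_of_gt (lt_of_lt_of_le hτ0 hx.1)
        · exact hint τ c hτ0 hτ.2 hcl
        · intro s hs
          have hs0 : 0 < s := lt_of_lt_of_le hτ0 hs.1
          have := hbound s ⟨hs0, hs.2⟩
          calc (1:ℝ)/2 * (1/s) = 1/(2*s) := by field_simp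
          _ ≤ h s := hbound s ⟨hs0, hs.2⟩
      have hcomp : ∫ s in τ..c, (1:ℝ)/2 * (1/s) = 1/2 * Real.log (c/τ) := by
        rw [intervalIntegral.integral_const_mul, integral_one_div]
        rw [Set.uIcc_of_le hτ.2]
        intro hmem
        exact absurd hmem.1 (not_le.2 hτ0)
      have hlog : 1/2 * Real.log (c/τ) + K ≤ g τ := by
        rw [← hgsplit, ← hcomp]; linarith
      have h2 : Real.log (c/τ) + 2*K ≤ 2 * g τ := by linarith
      calc E * c * (1/τ) = Real.exp (Real.log (c/τ) + 2*K) := by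
            rw [Real.exp_add, Real.exp_log (by positivity)]
            rw [hE]; ring
        _ ≤ Real.exp (2 * g τ) := Real.exp_le_exp.2 h2
    have hmono2 : ∫ τ in δ..c, E * c * (1/τ) ≤ ∫ τ in δ..c, Real.exp (2 * g τ) := by
      apply intervalIntegral.integral_mono_on hδc.le _ (hintF δ c hδ0 hδc.le hcl) hpt
      apply ContinuousOn.intervalIntegrable
      apply ContinuousOn.mono (s := {x : ℝ | x ≠ 0})
      · exact continuousOn_const.mul (continuousOn_const.div continuousOn_id (fun x hx => hx))
      · rw [Set.uIcc_of_le hδc.le]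
        exact fun x hx => ne_of_gt (lt_of_lt_of_le hδ0 hx.1)
    have hcomp2 : ∫ τ in δ..c, E * c * (1/τ) = E * c * (Real.log c - Real.log δ) := by
      rw [intervalIntegral.integral_const_mul, integral_one_div, Real.log_div
        (ne_of_gt hc0) (ne_of_gt hδ0)]
      rw [Set.uIcc_of_le hδc.le]
      intro hmem
      exact absurd hmem.1 (not_le.2 hδ0)
    linarith
  -- conclude
  have htends : Filter.Tendsto (fun δ => E * c * (Real.log c - Real.log δ) + C0)
      (nhdsWithin 0 (Set.Ioi 0)) Filter.atTop := by
    apply Filter.tendsto_atTop_add_const_right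
    apply Filter.Tendsto.const_mul_atTop (by positivity : 0 < E * c)
    have : Filter.Tendsto (fun δ : ℝ => -Real.log δ) (nhdsWithin 0 (Set.Ioi 0)) atTop :=
      tendsto_neg_atBot_atTop.comp Real.tendsto_log_nhdsGT_zero
    exact (Filter.tendsto_atTop_add_const_left _ (Real.log c) this).congr
      (fun x => by ring)
  have hmain : Filter.Tendsto (fun δ => ∫ τ in δ..l, Real.exp (2 * ∫ s in τ..l, h s))
      (nhdsWithin 0 (Set.Ioi 0)) Filter.atTop := by
    apply Filter.tendsto_atTop_mono' _ _ htends
    filter_upwards [Ioo_mem_nhdsGT_of_mem (Set.left_mem_Ico.2 hc0)] with δ hδ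
    exact key δ hδ
  exact ⟨hmain, hmain.inv_tendsto_atTop⟩
end

section
/- Let α > 0, let v : (0,∞) → ℝ be strictly increasing with lim_{r→∞} v(r)/log r = α, and let G : (0,∞) → ℝ be convex with respect to v, i.e. for all 0 < r₁ < r₂ < r₃ one has G(r₂) ≤ ((v(r₃) − v(r₂))·G(r₁) + (v(r₂) − v(r₁))·G(r₃)) / (v(r₃) − v(r₁)). Suppose liminf_{r→∞} G(r)/log r = λ for some real number λ. Then the function r ↦ G(r) − (λ/α)·v(r) is non-increasing on (0,∞), and consequently limsup_{r→∞} G(r)/log r = λ. -/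
open Set Filter

/-- Let `α > 0`, let `v : (0,∞) → ℝ` be strictly increasing with
`v r / log r → α` as `r → ∞`, and let `G : (0,∞) → ℝ` be convex with respect to `v`.
If `liminf_{r→∞} G r / log r = λ` (expressed by its `ε`-characterization: for every
`ε > 0`, eventually `λ − ε < G r / log r`, and frequently `G r / log r < λ + ε`),
then `r ↦ G r − (λ/α)·v r` is non-increasing on `(0,∞)`, and consequently
`limsup_{r→∞} G r / log r = λ`. -/
theorem stmt11 (a lam : ℝ) (v G : ℝ → ℝ)
    (ha : 0 < a)
    (hv_mono : StrictMonoOn v (Set.Ioi 0))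
    (hv_lim : Filter.Tendsto (fun r => v r / Real.log r) Filter.atTop (nhds a))
    (hconvex : ∀ r₁ r₂ r₃ : ℝ, 0 < r₁ → r₁ < r₂ → r₂ < r₃ →
      G r₂ ≤ ((v r₃ - v r₂) * G r₁ + (v r₂ - v r₁) * G r₃) / (v r₃ - v r₁))
    (hliminf_le : ∀ ε > (0:ℝ), ∀ᶠ r in Filter.atTop, lam - ε < G r / Real.log r)
    (hliminf_ge : ∀ ε > (0:ℝ), ∃ᶠ r in Filter.atTop, G r / Real.log r < lam + ε) :
    (∀ r₁ r₂ : ℝ, 0 < r₁ → r₁ ≤ r₂ →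
        G r₂ - (lam / a) * v r₂ ≤ G r₁ - (lam / a) * v r₁) ∧
      Filter.limsup (fun r => G r / Real.log r) Filter.atTop = lam := by
  -- auxiliary limit computation
  have tendsto_aux : ∀ C c D : ℝ,
      Tendsto (fun r => (C + c * (v r - D)) / Real.log r) atTop (nhds (c * a)) := by
    intro C c D
    have hlog : Tendsto (fun r => (Real.log r)⁻¹) atTop (nhds 0) :=
      Real.tendsto_log_atTop.inv_tendsto_atTop
    have h := (hlog.const_mul (C - c * D)).add (hv_lim.const_mul c)
    have heq : (fun r => (C + c * (v r - D)) / Real.log r)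
        = fun r => (C - c * D) * (Real.log r)⁻¹ + c * (v r / Real.log r) := by
      funext r; simp only [div_eq_mul_inv]; ring
    rw [heq]
    simpa using h
  -- key monotonicity step
  have key : ∀ r₁ r₂ : ℝ, 0 < r₁ → r₁ < r₂ →
      G r₂ - (lam / a) * v r₂ ≤ G r₁ - (lam / a) * v r₁ := by
    intro r₁ r₂ h1 h12
    by_contra hcon'
    push_neg at hcon'
    have h2pos : (0:ℝ) < r₂ := h1.trans h12
    have hv12 : v r₁ < v r₂ := hv_mono (mem_Ioi.2 h1) (mem_Ioi.2 h2pos) h12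
    have hA : 0 < v r₂ - v r₁ := sub_pos.2 hv12
    set c := (G r₂ - G r₁) / (v r₂ - v r₁) with hcdef
    have hc : lam / a < c := by
      rw [hcdef, lt_div_iff₀ hA]
      nlinarith [hcon']
    have hcA : c * (v r₂ - v r₁) = G r₂ - G r₁ := div_mul_cancel₀ _ hA.ne'
    have hslope : ∀ r₃, r₂ < r₃ → G r₂ + c * (v r₃ - v r₂) ≤ G r₃ := by
      intro r₃ h23
      have h3pos : (0:ℝ) < r₃ := h2pos.trans h23
      have hv23 : v r₂ < v r₃ := hv_mono (mem_Ioi.2 h2pos) (mem_Ioi.2 h3pos) h23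
      have hv13 : v r₁ < v r₃ := hv12.trans hv23
      have hB : 0 < v r₃ - v r₂ := sub_pos.2 hv23
      have hAB : 0 < v r₃ - v r₁ := sub_pos.2 hv13
      have hcv := hconvex r₁ r₂ r₃ h1 h12 h23
      rw [le_div_iff₀ hAB] at hcv
      have key2 : (G r₂ - G r₁) * (v r₃ - v r₂) ≤ (G r₃ - G r₂) * (v r₂ - v r₁) := by
        nlinarith [hcv]
      have hstep : c * (v r₃ - v r₂) ≤ G r₃ - G r₂ := by
        rw [hcdef, div_mul_eq_mul_div, div_le_iff₀ hA]
        nlinarith [key2]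
      linarith
    have hca : lam < c * a := by
      have := (div_lt_iff₀ ha).1 hc
      linarith
    set ε := (c * a - lam) / 2 with hεdef
    have hε : 0 < ε := by simp only [hεdef]; linarith
    have hlim := tendsto_aux (G r₂) c (v r₂)
    have hev : ∀ᶠ r in atTop, lam + ε < (G r₂ + c * (v r - v r₂)) / Real.log r :=
      hlim.eventually (eventually_gt_nhds (by simp only [hεdef]; linarith))
    have hev2 : ∀ᶠ r in atTop, lam + ε < G r / Real.log r := by
      filter_upwards [hev, eventually_gt_atTop r₂, eventually_gt_atTop 1] with r h1' h2' h3'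
      have hlogpos : 0 < Real.log r := Real.log_pos h3'
      calc lam + ε < (G r₂ + c * (v r - v r₂)) / Real.log r := h1'
        _ ≤ G r / Real.log r := by
            exact div_le_div_of_nonneg_right (hslope r h2') hlogpos.le
    obtain ⟨r, hr1, hr2⟩ := ((hliminf_ge ε hε).and_eventually hev2).exists
    linarith
  have hmono : ∀ r₁ r₂ : ℝ, 0 < r₁ → r₁ ≤ r₂ →
      G r₂ - (lam / a) * v r₂ ≤ G r₁ - (lam / a) * v r₁ := by
    intro r₁ r₂ h1 h12
    rcases eq_or_lt_of_le h12 with rfl | h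
    · exact le_rfl
    · exact key r₁ r₂ h1 h
  refine ⟨hmono, ?_⟩
  -- upper bound on G r / log r eventually
  have hupper : ∀ ε > (0:ℝ), ∀ᶠ r in atTop, G r / Real.log r < lam + ε := by
    intro ε hε
    have hlim2 : Tendsto (fun r => (G 1 + (lam / a) * (v r - v 1)) / Real.log r) atTop
        (nhds lam) := by
      have := tendsto_aux (G 1) (lam / a) (v 1)
      rwa [div_mul_cancel₀ lam ha.ne'] at this
    have hev := hlim2.eventually (eventually_lt_nhds (lt_add_of_pos_right lam hε))
    filter_upwards [hev, eventually_gt_atTop 1] with r h1 h2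
    have hlogpos : 0 < Real.log r := Real.log_pos h2
    have hGle : G r ≤ G 1 + (lam / a) * (v r - v 1) := by
      have := hmono 1 r one_pos h2.le
      linarith
    calc G r / Real.log r ≤ (G 1 + (lam / a) * (v r - v 1)) / Real.log r :=
          div_le_div_of_nonneg_right hGle hlogpos.le
      _ < lam + ε := h1
  have hbdd : IsBoundedUnder (· ≤ ·) atTop (fun r => G r / Real.log r) :=
    ⟨lam + 1, (hupper 1 one_pos).mono fun r h => h.le⟩
  have hcobdd : IsCoboundedUnder (· ≤ ·) atTop (fun r => G r / Real.log r) :=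
    isCoboundedUnder_le_of_eventually_le atTop
      ((hliminf_le 1 one_pos).mono fun r h => h.le)
  apply le_antisymm
  · by_contra hlt
    push_neg at hlt
    set L := limsup (fun r => G r / Real.log r) atTop with hL
    have hεL : (0:ℝ) < (L - lam) / 2 := by linarith
    have := limsup_le_of_le hcobdd ((hupper _ hεL).mono fun r h => h.le)
    rw [← hL] at this
    linarith
  · by_contra hlt
    push_neg at hlt
    set L := limsup (fun r => G r / Real.log r) atTop with hL
    have hεL : (0:ℝ) < (lam - L) / 2 := by linarith
    have hfreq : ∃ᶠ r in atTop, lam - (lam - L) / 2 ≤ G r / Real.log r :=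
      ((hliminf_le _ hεL).mono fun r h => h.le).frequently
    have := le_limsup_of_frequently_le hfreq hbdd
    rw [← hL] at this
    linarith
end

section
/- Let 0 < R ≤ ∞, let v : (0,R) → ℝ be strictly increasing with lim_{r→0⁺} v(r) = −∞, and let G : (0,R) → ℝ be convex with respect to v, i.e. for all 0 < r₁ < r₂ < r₃ < R one has G(r₂) ≤ ((v(r₃) − v(r₂))·G(r₁) + (v(r₂) − v(r₁))·G(r₃)) / (v(r₃) − v(r₁)). Suppose lim_{r→0⁺} G(r)/v(r) = k for some real number k. Then the function r ↦ G(r) − k·v(r) is non-decreasing on (0,R). -/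
open Set Filter

/-- Let `0 < R ≤ ∞` (as an extended real number), let
`v : (0,R) → ℝ` be strictly increasing with `v r → −∞` as `r → 0⁺`, and let
`G : (0,R) → ℝ` be convex with respect to `v`. If `G r / v r → k` as `r → 0⁺`,
then `r ↦ G r − k·v r` is non-decreasing on `(0,R)`. -/
theorem stmt12 (R : EReal) (k : ℝ) (v G : ℝ → ℝ)
    (hR : 0 < R)
    (hv_mono : StrictMonoOn v {r : ℝ | 0 < r ∧ (r : EReal) < R})
    (hv_lim : Filter.Tendsto v (nhdsWithin 0 (Set.Ioi 0)) Filter.atBot)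
    (hconvex : ∀ r₁ r₂ r₃ : ℝ, 0 < r₁ → r₁ < r₂ → r₂ < r₃ → (r₃ : EReal) < R →
      G r₂ ≤ ((v r₃ - v r₂) * G r₁ + (v r₂ - v r₁) * G r₃) / (v r₃ - v r₁))
    (hk : Filter.Tendsto (fun r => G r / v r) (nhdsWithin 0 (Set.Ioi 0)) (nhds k)) :
    ∀ r₁ r₂ : ℝ, 0 < r₁ → r₁ ≤ r₂ → (r₂ : EReal) < R →
      G r₁ - k * v r₁ ≤ G r₂ - k * v r₂ := by
  intro r₁ r₂ hr₁ hle hr₂R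
  rcases eq_or_lt_of_le hle with rfl | hlt
  · exact le_refl _
  have hr₂ : 0 < r₂ := hr₁.trans hlt
  have hmem₂ : r₂ ∈ {r : ℝ | 0 < r ∧ (r : EReal) < R} := ⟨hr₂, hr₂R⟩
  set L := nhdsWithin (0 : ℝ) (Set.Ioi 0) with hL
  have hvneg : ∀ᶠ r in L, v r ≤ -1 := hv_lim.eventually (eventually_le_atBot (-1))
  have hsmall : ∀ᶠ r in L, r ∈ Set.Ioo 0 r₁ :=
    Ioo_mem_nhdsGT_of_mem ⟨le_refl 0, hr₁⟩
  -- the auxiliary function whose limit we take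
  have key : ∀ᶠ r in L, G r₁ ≤
      ((v r₂ - v r₁) * (G r / v r) + (v r₁ / v r - 1) * G r₂) / (v r₂ / v r - 1) := by
    filter_upwards [hvneg, hsmall] with r hv hr
    have h0 : 0 < r := hr.1
    have hrr₁ : r < r₁ := hr.2
    have hrR : (r : EReal) < R := lt_trans (by exact_mod_cast hrr₁.trans hlt) hr₂R
    have hvr2 : v r < v r₂ := hv_mono ⟨h0, hrR⟩ hmem₂ (hrr₁.trans hlt)
    have hconv := hconvex r r₁ r₂ h0 hrr₁ hlt hr₂R
    have hvne : v r ≠ 0 := by linarith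
    have hdne : v r₂ - v r ≠ 0 := by linarith
    have heq : ((v r₂ - v r₁) * G r + (v r₁ - v r) * G r₂) / (v r₂ - v r)
        = ((v r₂ - v r₁) * (G r / v r) + (v r₁ / v r - 1) * G r₂) / (v r₂ / v r - 1) := by
      have h2 : v r₂ / v r - 1 ≠ 0 := by
        have : v r₂ / v r - 1 = (v r₂ - v r) / v r := by field_simp
        rw [this]
        exact div_ne_zero hdne hvne
      field_simp
    rw [← heq]
    exact hconv
  have hinv : Tendsto (fun r => (v r)⁻¹) L (nhds 0) := by
    have h1 : Tendsto (fun r => -v r) L atTop := tendsto_neg_atBot_atTop.comp hv_lim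
    have h2 := h1.inv_tendsto_atTop
    have h3 := h2.neg
    simpa using h3
  have hlim : Tendsto
      (fun r => ((v r₂ - v r₁) * (G r / v r) + (v r₁ / v r - 1) * G r₂) / (v r₂ / v r - 1))
      L (nhds (((v r₂ - v r₁) * k + (v r₁ * 0 - 1) * G r₂) / (v r₂ * 0 - 1))) := by
    have hd₁ : Tendsto (fun r => v r₁ / v r) L (nhds (v r₁ * 0)) := by
      simpa [div_eq_mul_inv] using (tendsto_const_nhds.mul hinv)
    have hd₂ : Tendsto (fun r => v r₂ / v r) L (nhds (v r₂ * 0)) := by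
      simpa [div_eq_mul_inv] using (tendsto_const_nhds.mul hinv)
    exact Tendsto.div
      ((tendsto_const_nhds.mul hk).add ((hd₁.sub tendsto_const_nhds).mul tendsto_const_nhds))
      (hd₂.sub tendsto_const_nhds) (by norm_num)
  have hineq : G r₁ ≤ ((v r₂ - v r₁) * k + (v r₁ * 0 - 1) * G r₂) / (v r₂ * 0 - 1) :=
    ge_of_tendsto hlim key
  have hval : ((v r₂ - v r₁) * k + (v r₁ * 0 - 1) * G r₂) / (v r₂ * 0 - 1)
      = G r₂ - k * (v r₂ - v r₁) := by
    norm_num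
    ring
  rw [hval] at hineq
  linarith
end
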